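/- arXiv:2411.01080 — 7 statements merged into one kernel-verified Lean document; each statement's English description precedes it below -/
import Mathlib

section
/- Let I ⊆ ℝ be a nonempty open interval, κ ∈ ℝ with κ ≠ 0, n ≥ 1 an integer, c_1,…,c_n ∈ ℝ, and let y, x̂_1,…,x̂_n : ℝ → ℝ be infinitely differentiable with y(t) ≠ 0 on I, x̂_i′(t) = −κ c_i y(t) x̂_i(t) on I for each i, and y′(t) = κ y(t) Σ_{i=1}^n c_i x̂_i(t) on I. Then for every integer k ≥ 1 and all t ∈ I, Σ_{i=1}^n c_i^k x̂_i(t) = α_k(t). -/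
open scoped ContDiff

/-- The recursively defined functions `f_{(j,k)}`:
`f_{(1,1)}(t) = κ y(t)`, `f_{(j,k)} = (f_{(j,k−1)})′ − κ y f_{(j−1,k−1)}` for `(j,k) ≠ (1,1)`,
and `f_{(j,k)} = 0` whenever `j > k` or `j = 0` or `k = 0`. -/
noncomputable def fjk (κ : ℝ) (y : ℝ → ℝ) : ℕ → ℕ → ℝ → ℝ
  | 0, _ => 0
  | _, 0 => 0
  | 1, 1 => fun t => κ * y t
  | j + 1, k + 1 =>
    if j + 1 > k + 1 then 0
    else fun t => deriv (fjk κ y (j + 1) k) t - κ * y t * fjk κ y j k t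
  termination_by j k => k

/-- The moment functions `α_k`: `α_0 = 1 − y`, `α_1 = y′/(κ y)`, and for `k ≥ 2`,
`α_k = (y^{(k)} − Σ_{j=1}^{k−1} f_{(j,k)} α_j) / ((−1)^{k+1} κ^k y^k)`. -/
noncomputable def alphaF (κ : ℝ) (y : ℝ → ℝ) : ℕ → ℝ → ℝ
  | 0 => fun t => 1 - y t
  | 1 => fun t => deriv y t / (κ * y t)
  | k + 2 => fun t =>
      (iteratedDeriv (k + 2) y t -
        ∑ j ∈ (Finset.Icc 1 (k + 1)).attach,
          fjk κ y j.1 (k + 2) t * alphaF κ y j.1 t) /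
      ((-1 : ℝ) ^ (k + 3) * κ ^ (k + 2) * (y t) ^ (k + 2))
  termination_by k => k
  decreasing_by
    have := (Finset.mem_Icc.mp j.2).2
    omega

lemma fjk_zero_left (κ : ℝ) (y : ℝ → ℝ) (k : ℕ) : fjk κ y 0 k = 0 := by simp [fjk]

lemma fjk_zero_right (κ : ℝ) (y : ℝ → ℝ) (j : ℕ) : fjk κ y j 0 = 0 := by
  cases j <;> simp [fjk]

lemma fjk_one_one (κ : ℝ) (y : ℝ → ℝ) : fjk κ y 1 1 = fun t => κ * y t := by simp [fjk]

lemma fjk_succ (κ : ℝ) (y : ℝ → ℝ) (j k : ℕ) (h : ¬(j = 0 ∧ k = 0)) :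
    fjk κ y (j+1) (k+1) = if j + 1 > k + 1 then 0
    else fun t => deriv (fjk κ y (j + 1) k) t - κ * y t * fjk κ y j k t := by
  rcases j with _|j <;> rcases k with _|k <;>
    first | omega | (rw [fjk]; all_goals first | simp [fjk] | omega)

lemma fjk_eq_zero (κ : ℝ) (y : ℝ → ℝ) (j k : ℕ) (h : k < j) : fjk κ y j k = 0 := by
  rcases j with _|j
  · omega
  rcases k with _|k
  · exact fjk_zero_right _ _ _
  rw [fjk_succ κ y j k (by omega), if_pos (by omega)]

lemma fjk_contDiff (κ : ℝ) (y : ℝ → ℝ) (hy : ContDiff ℝ ∞ y) :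
    ∀ k j, ContDiff ℝ ∞ (fjk κ y j k) := by
  intro k
  induction k with
  | zero => intro j; rw [fjk_zero_right]; exact contDiff_const
  | succ k ih =>
    intro j
    rcases j with _|j
    · rw [fjk_zero_left]; exact contDiff_const
    by_cases h : j = 0 ∧ k = 0
    · rw [h.1, h.2, fjk_one_one]; exact contDiff_const.mul hy
    rw [fjk_succ κ y j k h]
    split
    · exact contDiff_const
    · exact ((contDiff_infty_iff_deriv.mp (ih (j+1))).2).sub
        ((contDiff_const.mul hy).mul (ih j))

lemma fjk_diag (κ : ℝ) (y : ℝ → ℝ) :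
    ∀ k, 1 ≤ k → ∀ t, fjk κ y k k t = (-1 : ℝ) ^ (k+1) * κ ^ k * (y t) ^ k := by
  intro k
  induction k with
  | zero => omega
  | succ k ih =>
    intro _ t
    rcases Nat.eq_zero_or_pos k with hk | hk
    · subst hk; rw [fjk_one_one]; ring
    rw [fjk_succ κ y k k (by omega), if_neg (by omega)]
    show deriv (fjk κ y (k+1) k) t - κ * y t * fjk κ y k k t = _
    rw [fjk_eq_zero κ y (k+1) k (by omega), ih hk t,
      show (0 : ℝ → ℝ) = fun _ => (0:ℝ) from rfl, deriv_const]
    ring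

/-- On a nonempty open interval on which `y ≠ 0`, `x̂_i′ = −κ c_i y x̂_i` and
`y′ = κ y Σ_i c_i x̂_i`, one has `Σ_{i=1}^n c_i^k x̂_i(t) = α_k(t)` for every `k ≥ 1`. -/
theorem stmt_3 (a b : ℝ) (hab : a < b) (κ : ℝ) (hκ : κ ≠ 0) (n : ℕ) (hn : 1 ≤ n)
    (c : Fin n → ℝ) (y : ℝ → ℝ) (x : Fin n → ℝ → ℝ)
    (hy : ContDiff ℝ (⊤ : ℕ∞) y) (hx : ∀ i, ContDiff ℝ (⊤ : ℕ∞) (x i))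
    (hy0 : ∀ t ∈ Set.Ioo a b, y t ≠ 0)
    (hxode : ∀ t ∈ Set.Ioo a b, ∀ i, deriv (x i) t = -κ * c i * y t * x i t)
    (hyode : ∀ t ∈ Set.Ioo a b, deriv y t = κ * y t * ∑ i, c i * x i t) :
    ∀ k : ℕ, 1 ≤ k → ∀ t ∈ Set.Ioo a b,
      ∑ i, (c i) ^ k * x i t = alphaF κ y k t := by
  have h1le : (1 : WithTop ℕ∞) ≤ ∞ := by exact_mod_cast le_top
  have hy' : ContDiff ℝ ∞ y := hy.of_le (by simp)
  have hf := fjk_contDiff κ y hy'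
  -- derivative of the moment sums
  have hm : ∀ (j : ℕ), ∀ t ∈ Set.Ioo a b,
      HasDerivAt (fun s => ∑ i, c i ^ j * x i s)
        (-(κ * y t) * ∑ i, c i ^ (j+1) * x i t) t := by
    intro j t ht
    have h1 : HasDerivAt (fun s => ∑ i, c i ^ j * x i s)
        (∑ i, c i ^ j * deriv (x i) t) t := by
      apply HasDerivAt.fun_sum
      intro i _
      exact (((((hx i).of_le (by simp)).differentiable (by simp : (∞ : WithTop ℕ∞) ≠ 0)) t).hasDerivAt).const_mul _
    have e : (∑ i, c i ^ j * deriv (x i) t)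
        = -(κ * y t) * ∑ i, c i ^ (j+1) * x i t := by
      rw [Finset.mul_sum]
      refine Finset.sum_congr rfl fun i _ => ?_
      rw [hxode t ht i]; ring
    exact e ▸ h1
  -- the key expansion of iterated derivatives of y
  have hB : ∀ k : ℕ, 1 ≤ k → ∀ t ∈ Set.Ioo a b,
      iteratedDeriv k y t
        = ∑ j ∈ Finset.range (k+1), fjk κ y j k t * ∑ i, c i ^ j * x i t := by
    intro k
    induction k with
    | zero => omega
    | succ k ihk =>
      intro _ t ht
      rcases Nat.eq_zero_or_pos k with hk | hk
      · subst hk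
        rw [iteratedDeriv_one, hyode t ht]
        simp [Finset.sum_range_succ, fjk_zero_left, fjk_one_one, pow_one]
      -- inductive step
      have heq : deriv (iteratedDeriv k y) t
          = deriv (fun s => ∑ j ∈ Finset.range (k+1),
              fjk κ y j k s * ∑ i, c i ^ j * x i s) t := by
        apply Filter.EventuallyEq.deriv_eq
        exact Filter.eventuallyEq_of_mem (isOpen_Ioo.mem_nhds ht) fun s hs => ihk hk s hs
      have hg : HasDerivAt (fun s => ∑ j ∈ Finset.range (k+1),
            fjk κ y j k s * ∑ i, c i ^ j * x i s)
          (∑ j ∈ Finset.range (k+1),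
            (deriv (fjk κ y j k) t * (∑ i, c i ^ j * x i t)
              + fjk κ y j k t * (-(κ * y t) * ∑ i, c i ^ (j+1) * x i t))) t := by
        apply HasDerivAt.fun_sum
        intro j _
        exact (((hf k j).differentiable (by simp : (∞ : WithTop ℕ∞) ≠ 0) t).hasDerivAt).mul (hm j t ht)
      rw [iteratedDeriv_succ, heq, hg.deriv]
      -- now pure algebra with the recursion for fjk
      have hterm : ∀ j ∈ Finset.range (k+2),
          fjk κ y j (k+1) t * ∑ i, c i ^ j * x i t
            = deriv (fjk κ y j k) t * ∑ i, c i ^ j * x i t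
              - (κ * y t * fjk κ y (j-1) k t) * ∑ i, c i ^ j * x i t := by
        intro j _
        rcases j with _|j
        · rw [fjk_zero_left, fjk_zero_left,
            show (0 : ℝ → ℝ) = fun _ => (0:ℝ) from rfl, deriv_const]
          simp
        simp only [Nat.add_sub_cancel]
        by_cases hj : j + 1 > k + 1
        · rw [fjk_eq_zero κ y (j+1) (k+1) (by omega),
            fjk_eq_zero κ y (j+1) k (by omega), fjk_eq_zero κ y j k (by omega),
            show (0 : ℝ → ℝ) = fun _ => (0:ℝ) from rfl, deriv_const]
          simp
        · rw [fjk_succ κ y j k (by omega), if_neg hj]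
          show (deriv (fjk κ y (j+1) k) t - κ * y t * fjk κ y j k t) * _ = _
          ring
      rw [Finset.sum_congr rfl hterm, Finset.sum_sub_distrib,
        Finset.sum_range_succ
          (fun j => deriv (fjk κ y j k) t * ∑ i, c i ^ j * x i t) (k+1),
        fjk_eq_zero κ y (k+1) k (by omega),
        show (0 : ℝ → ℝ) = fun _ => (0:ℝ) from rfl, deriv_const,
        Finset.sum_range_succ'
          (fun j => (κ * y t * fjk κ y (j-1) k t) * ∑ i, c i ^ j * x i t) (k+1)]
      simp only [Nat.add_sub_cancel, Nat.zero_sub, fjk_zero_left, Pi.zero_apply,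
        zero_mul, mul_zero, add_zero]
      rw [Finset.sum_add_distrib, sub_eq_add_neg]
      congr 1
      rw [← Finset.sum_neg_distrib]
      exact Finset.sum_congr rfl fun j _ => by ring
  -- main induction
  intro k
  induction k using Nat.strong_induction_on with
  | _ k ih =>
    intro hk t ht
    have hne : y t ≠ 0 := hy0 t ht
    rcases k with _|_|k
    · omega
    · -- k = 1
      rw [show alphaF κ y 1 = fun t => deriv y t / (κ * y t) from by simp [alphaF]]
      simp only
      rw [hyode t ht, mul_div_cancel_left₀ _ (mul_ne_zero hκ hne)]
      simp [pow_one]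
    · -- k = k + 2
      rw [show alphaF κ y (k+2) = fun t =>
          (iteratedDeriv (k + 2) y t -
            ∑ j ∈ (Finset.Icc 1 (k + 1)).attach,
              fjk κ y j.1 (k + 2) t * alphaF κ y j.1 t) /
          ((-1 : ℝ) ^ (k + 3) * κ ^ (k + 2) * (y t) ^ (k + 2)) from by rw [alphaF]]
      simp only
      rw [Finset.sum_attach (Finset.Icc 1 (k+1))
        (fun j => fjk κ y j (k + 2) t * alphaF κ y j t)]
      have hsub : ∑ j ∈ Finset.Icc 1 (k+1), fjk κ y j (k + 2) t * alphaF κ y j t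
          = ∑ j ∈ Finset.Icc 1 (k+1), fjk κ y j (k + 2) t * ∑ i, c i ^ j * x i t := by
        refine Finset.sum_congr rfl fun j hj => ?_
        have hj' := Finset.mem_Icc.mp hj
        rw [← ih j (by omega) (by omega) t ht]
      rw [hsub, hB (k+2) (by omega) t ht,
        Finset.sum_range_succ (fun j => fjk κ y j (k+2) t * ∑ i, c i ^ j * x i t) (k+2)]
      have hIcc : ∑ j ∈ Finset.Icc 1 (k+1), fjk κ y j (k + 2) t * ∑ i, c i ^ j * x i t
          = ∑ j ∈ Finset.range (k+2), fjk κ y j (k+2) t * ∑ i, c i ^ j * x i t := by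
        rw [Finset.sum_range_succ'
          (fun j => fjk κ y j (k+2) t * ∑ i, c i ^ j * x i t) (k+1), fjk_zero_left]
        simp only [Pi.zero_apply, zero_mul, add_zero]
        rw [← Finset.Ico_add_one_right_eq_Icc, Finset.sum_Ico_eq_sum_range]
        try simp only [Nat.add_sub_cancel]
        exact Finset.sum_congr rfl fun j _ => by rw [Nat.add_comm 1 j]
      rw [hIcc, fjk_diag κ y (k+2) (by omega) t]
      have hD : ((-1 : ℝ) ^ (k + 3) * κ ^ (k + 2) * (y t) ^ (k + 2)) ≠ 0 :=
        mul_ne_zero (mul_ne_zero (pow_ne_zero _ (by norm_num)) (pow_ne_zero _ hκ))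
          (pow_ne_zero _ hne)
      rw [show (-1 : ℝ) ^ (k + 2 + 1) = (-1 : ℝ) ^ (k+3) from rfl]
      field_simp
      ring
end

section
/- Let n ≥ 1, let c_1,…,c_n be pairwise distinct nonzero reals, and let σ_k denote the k-th elementary symmetric polynomial in c_1,…,c_n (with σ_0 = 1). Let V be the (n+1)×(n+1) matrix whose entry in row i (i = 0,…,n) and column j (j = 1,…,n) is c_j^i and whose last column is (1,0,…,0)ᵀ. If x = (x_1,…,x_n, x̄) ∈ ℝ^{n+1} and a = (a_0, a_1, …, a_n) ∈ ℝ^{n+1} satisfy V x = a, then x̄ = (1/σ_n) Σ_{l=0}^n (−1)^l a_l σ_{n−l}. -/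
/-- The `(n+1) × (n+1)` Vandermonde matrix in nodes `c_1, …, c_n` (rows indexed by
powers `0, …, n`), augmented by a final column `(1, 0, …, 0)ᵀ`. -/
def Vmat (n : ℕ) (c : Fin n → ℝ) : Matrix (Fin (n + 1)) (Fin (n + 1)) ℝ :=
  Matrix.of fun i j =>
    if h : (j : ℕ) < n then (c ⟨j, h⟩) ^ (i : ℕ) else if (i : ℕ) = 0 then 1 else 0

/-- The `k`-th elementary symmetric polynomial `σ_k` in `c_1, …, c_n` (with `σ_0 = 1`). -/
noncomputable def esymmR (n : ℕ) (c : Fin n → ℝ) (k : ℕ) : ℝ :=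
  ∑ s ∈ (Finset.univ : Finset (Fin n)).powersetCard k, ∏ i ∈ s, c i

/-! The row vector `w` with `w l = (-1)^l σ_{n-l}` lists the coefficients of `∏ i, (c i - t)` in
powers of `t`, so it annihilates every Vandermonde column `(c j ^ l)_l`, while against the last
column `(1, 0, …, 0)ᵀ` it gives `w 0 = σ_n`. Hence `σ_n x̄ = w ⬝ᵥ V x = w ⬝ᵥ a`, and
`σ_n = ∏ i, c i ≠ 0`. -/

open Finset Matrix

lemma esymmR_eq_esymm (n : ℕ) (c : Fin n → ℝ) (k : ℕ) :
    esymmR n c k = (univ.val.map c).esymm k :=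
  (esymm_map_val c _ k).symm

lemma esymmR_self (n : ℕ) (c : Fin n → ℝ) : esymmR n c n = ∏ i, c i := by
  simpa [esymmR] using congrArg (fun S => ∑ s ∈ S, ∏ i ∈ s, c i)
    (powersetCard_self (univ : Finset (Fin n)))

lemma prod_sub_eq_sum_esymmR (n : ℕ) (c : Fin n → ℝ) (t : ℝ) :
    ∏ i, (c i - t) = ∑ l : Fin (n + 1), (-1) ^ (l : ℕ) * esymmR n c (n - l) * t ^ (l : ℕ) := by
  have vieta := congrArg (Polynomial.eval (-t))
    (Multiset.prod_X_add_C_eq_sum_esymm (univ.val.map c))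
  simp only [Polynomial.eval_multiset_prod, Multiset.map_map, Function.comp_def,
    Polynomial.eval_add, Polynomial.eval_X, Polynomial.eval_C, Polynomial.eval_finsetSum,
    Polynomial.eval_mul, Polynomial.eval_pow, Multiset.card_map, card_val, card_univ,
    Fintype.card_fin, ← esymmR_eq_esymm] at vieta
  simp_rw [sub_eq_neg_add]
  rw [prod_eq_multiset_prod, vieta,
    Fin.sum_univ_eq_sum_range (fun l => (-1) ^ l * esymmR n c (n - l) * t ^ l),
    ← sum_range_reflect _ (n + 1)]
  refine sum_congr rfl fun k hk => ?_
  rw [Nat.add_sub_cancel, Nat.sub_sub_self (mem_range_succ_iff.mp hk), neg_pow]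
  ring

lemma Vmat_apply_castSucc (n : ℕ) (c : Fin n → ℝ) (i : Fin (n + 1)) (j : Fin n) :
    Vmat n c i j.castSucc = c j ^ (i : ℕ) := by
  simp only [Vmat, of_apply, Fin.val_castSucc, j.isLt, ↓reduceDIte, Fin.eta]

lemma Vmat_apply_last (n : ℕ) (c : Fin n → ℝ) :
    (fun i => Vmat n c i (Fin.last n)) = Pi.single 0 1 := by
  ext i
  simp only [Vmat, of_apply, Fin.val_last, lt_self_iff_false, ↓reduceDIte, Pi.single_apply,
    Fin.ext_iff, Fin.val_zero]

lemma vecMul_Vmat (n : ℕ) (c : Fin n → ℝ) :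
    (fun l : Fin (n + 1) => (-1) ^ (l : ℕ) * esymmR n c (n - l)) ᵥ* Vmat n c =
      Pi.single (Fin.last n) (esymmR n c n) := by
  ext j
  induction j using Fin.lastCases with
  | last => simp [vecMul, Vmat_apply_last]
  | cast j =>
    simp only [vecMul, dotProduct, Vmat_apply_castSucc, ← prod_sub_eq_sum_esymmR,
      Pi.single_eq_of_ne (Fin.castSucc_lt_last j).ne]
    exact prod_eq_zero (mem_univ j) (sub_self _)

theorem stmt_5_general (n : ℕ) (c : Fin n → ℝ)
    (hne : ∀ j, c j ≠ 0)
    (x a : Fin (n + 1) → ℝ)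
    (h : (Vmat n c).mulVec x = a) :
    x (Fin.last n) =
      (1 / esymmR n c n) *
        ∑ l : Fin (n + 1), (-1 : ℝ) ^ (l : ℕ) * a l * esymmR n c (n - (l : ℕ)) := by
  have hσ : esymmR n c n ≠ 0 := by
    rw [esymmR_self]
    exact prod_ne_zero_iff.mpr fun i _ => hne i
  have pairing : esymmR n c n * x (Fin.last n) =
      ∑ l : Fin (n + 1), (-1 : ℝ) ^ (l : ℕ) * a l * esymmR n c (n - (l : ℕ)) :=
    calc esymmR n c n * x (Fin.last n)
        = ((fun l : Fin (n + 1) => (-1) ^ (l : ℕ) * esymmR n c (n - l)) ᵥ* Vmat n c) ⬝ᵥ x := by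
          rw [vecMul_Vmat, single_dotProduct]
      _ = ∑ l : Fin (n + 1), (-1 : ℝ) ^ (l : ℕ) * a l * esymmR n c (n - (l : ℕ)) := by
          rw [← dotProduct_mulVec, h, dotProduct]
          simp only [mul_right_comm]
  rw [← pairing]
  field_simp

/-- If the `c_j` are pairwise distinct and nonzero and `V x = a`, then the last
component of `x` equals `(1/σ_n) Σ_{l=0}^n (−1)^l a_l σ_{n−l}`. -/
theorem stmt_5 (n : ℕ) (hn : 1 ≤ n) (c : Fin n → ℝ)
    (hdist : ∀ i j : Fin n, i ≠ j → c i ≠ c j) (hne : ∀ j, c j ≠ 0)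
    (x a : Fin (n + 1) → ℝ)
    (h : (Vmat n c).mulVec x = a) :
    x (Fin.last n) =
      (1 / esymmR n c n) *
        ∑ l : Fin (n + 1), (-1 : ℝ) ^ (l : ℕ) * a l * esymmR n c (n - (l : ℕ)) :=
  stmt_5_general n c hne x a h
end

section
/- Consider n groups partitioned into a set R of rationalists and a set M of imitators evolving on an interval [T_l, T_{l+1}) under the vaccine-surplus dynamics: ẋ_i(t) = −κ x_i(t) 1(c_i > 0) for i ∈ R and ẋ_i(t) = −κ x_i(t) (1 − Σ_{q=1}^n x_q(t)) c_i 1(c_i > 0) for i ∈ M, where 1(z) = 1 if z > 0 and 0 otherwise. Suppose c_i ≤ 0 for all i ∈ M, and let c′ be another payoff vector with c′_i ≤ 0 for all i ∈ M and with 1(c_i > 0) = 1(c′_i > 0) for every i ∈ R. Then any solution of the dynamics with payoffs c and any solution with payoffs c′ that have the same state at T_l coincide on [T_l, T_{l+1}); in particular the outputs y(t) = 1 − Σ_q x_q(t) coincide, so the payoff values on such a subinterval are unidentifiable. -/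
/-! Each coordinate solves a scalar linear equation `ẋᵢ = aᵢ xᵢ` whose rate is the same for both
payoff vectors: for a rationalist it is `-κ · 1(cᵢ > 0) = -κ · 1(c′ᵢ > 0)`, and for an imitator
`cᵢ ≤ 0` makes the indicator vanish, so `aᵢ = 0`. Solutions of a scalar linear equation are
determined by their initial value, since `(f - g) e^{-a t}` has zero derivative. -/

open Finset

noncomputable def indR (z : ℝ) : ℝ := if 0 < z then 1 else 0

open Set Real

lemma indR_eq_of_pos_iff {a b : ℝ} (h : 0 < a ↔ 0 < b) : indR a = indR b := by
  simp only [indR, h]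

lemma indR_of_nonpos {a : ℝ} (h : a ≤ 0) : indR a = 0 :=
  if_neg h.not_gt

lemma eqOn_Ico_of_hasDerivWithinAt_const_mul {a T T' : ℝ} {f g : ℝ → ℝ}
    (hf : ∀ t ∈ Ico T T', HasDerivWithinAt f (a * f t) (Ico T T') t)
    (hg : ∀ t ∈ Ico T T', HasDerivWithinAt g (a * g t) (Ico T T') t) (h0 : f T = g T) :
    EqOn f g (Ico T T') := by
  intro t ht
  set u : ℝ → ℝ := fun s => (f s - g s) * exp (-(a * s))
  have hu : ∀ s ∈ Ico T T', HasDerivWithinAt u 0 (Ico T T') s := by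
    intro s hs
    have he : HasDerivAt (fun s => exp (-(a * s))) (exp (-(a * s)) * -a) s := by
      simpa using (((hasDerivAt_id s).const_mul a).neg).exp
    exact (((hf s hs).sub (hg s hs)).mul he.hasDerivWithinAt).congr_deriv
      (by rw [Pi.sub_apply]; ring)
  have hconst : u t = u T := by
    simpa [sub_eq_zero] using (convex_Ico T T').norm_image_sub_le_of_norm_hasDerivWithin_le
      hu (fun _ _ => norm_zero.le) (left_mem_Ico.2 (ht.1.trans_lt ht.2)) ht
  simpa [u, h0, sub_eq_zero, exp_ne_zero] using hconst

theorem stmt_11_general (n : ℕ) (R M : Finset (Fin n))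
    (hpart : Disjoint R M ∧ R ∪ M = Finset.univ)
    (κ Tl Tl1 : ℝ)
    (c c' : Fin n → ℝ)
    (hcM : ∀ i ∈ M, c i ≤ 0) (hc'M : ∀ i ∈ M, c' i ≤ 0)
    (hcR : ∀ i ∈ R, (0 < c i ↔ 0 < c' i))
    (x x' : ℝ → Fin n → ℝ)
    (hxR : ∀ i ∈ R, ∀ t ∈ Set.Ico Tl Tl1,
      HasDerivWithinAt (fun s => x s i) (-κ * x t i * indR (c i)) (Set.Ico Tl Tl1) t)
    (hxM : ∀ i ∈ M, ∀ t ∈ Set.Ico Tl Tl1,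
      HasDerivWithinAt (fun s => x s i)
        (-κ * x t i * (1 - ∑ q, x t q) * c i * indR (c i)) (Set.Ico Tl Tl1) t)
    (hx'R : ∀ i ∈ R, ∀ t ∈ Set.Ico Tl Tl1,
      HasDerivWithinAt (fun s => x' s i) (-κ * x' t i * indR (c' i)) (Set.Ico Tl Tl1) t)
    (hx'M : ∀ i ∈ M, ∀ t ∈ Set.Ico Tl Tl1,
      HasDerivWithinAt (fun s => x' s i)
        (-κ * x' t i * (1 - ∑ q, x' t q) * c' i * indR (c' i)) (Set.Ico Tl Tl1) t)
    (h0 : x Tl = x' Tl) :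
    ∀ t ∈ Set.Ico Tl Tl1, x t = x' t := by
  intro t ht
  funext i
  obtain ⟨a, hxi, hx'i⟩ : ∃ a : ℝ,
      (∀ s ∈ Ico Tl Tl1, HasDerivWithinAt (fun s => x s i) (a * x s i) (Ico Tl Tl1) s) ∧
      (∀ s ∈ Ico Tl Tl1, HasDerivWithinAt (fun s => x' s i) (a * x' s i) (Ico Tl Tl1) s) := by
    rcases mem_union.1 (hpart.2 ▸ Finset.mem_univ i) with hi | hi
    · refine ⟨-κ * indR (c i), fun s hs => ?_, fun s hs => ?_⟩
      · simpa only [mul_right_comm] using hxR i hi s hs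
      · simpa only [mul_right_comm, indR_eq_of_pos_iff (hcR i hi)] using hx'R i hi s hs
    · refine ⟨0, fun s hs => ?_, fun s hs => ?_⟩
      · simpa [indR_of_nonpos (hcM i hi)] using hxM i hi s hs
      · simpa [indR_of_nonpos (hc'M i hi)] using hx'M i hi s hs
  exact eqOn_Ico_of_hasDerivWithinAt_const_mul hxi hx'i (congrFun h0 i) ht

/-- On a vaccine-surplus subinterval `[T_l, T_{l+1})` on which all imitative payoff
values are non-positive (for both payoff vectors `c` and `c′`), and on which the signs
of the rationalist payoffs agree between `c` and `c′`, any solution of the dynamics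
with payoffs `c` and any solution with payoffs `c′` that have the same state at `T_l`
coincide on `[T_l, T_{l+1})`; in particular the outputs coincide, so the payoff values
on such a subinterval are unidentifiable. -/
theorem stmt_11 (n : ℕ) (R M : Finset (Fin n))
    (hpart : Disjoint R M ∧ R ∪ M = Finset.univ)
    (κ Tl Tl1 : ℝ) (hT : Tl < Tl1)
    (c c' : Fin n → ℝ)
    (hcM : ∀ i ∈ M, c i ≤ 0) (hc'M : ∀ i ∈ M, c' i ≤ 0)
    (hcR : ∀ i ∈ R, (0 < c i ↔ 0 < c' i))
    (x x' : ℝ → Fin n → ℝ)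
    (hxR : ∀ i ∈ R, ∀ t ∈ Set.Ico Tl Tl1,
      HasDerivWithinAt (fun s => x s i) (-κ * x t i * indR (c i)) (Set.Ico Tl Tl1) t)
    (hxM : ∀ i ∈ M, ∀ t ∈ Set.Ico Tl Tl1,
      HasDerivWithinAt (fun s => x s i)
        (-κ * x t i * (1 - ∑ q, x t q) * c i * indR (c i)) (Set.Ico Tl Tl1) t)
    (hx'R : ∀ i ∈ R, ∀ t ∈ Set.Ico Tl Tl1,
      HasDerivWithinAt (fun s => x' s i) (-κ * x' t i * indR (c' i)) (Set.Ico Tl Tl1) t)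
    (hx'M : ∀ i ∈ M, ∀ t ∈ Set.Ico Tl Tl1,
      HasDerivWithinAt (fun s => x' s i)
        (-κ * x' t i * (1 - ∑ q, x' t q) * c' i * indR (c' i)) (Set.Ico Tl Tl1) t)
    (h0 : x Tl = x' Tl) :
    ∀ t ∈ Set.Ico Tl Tl1, x t = x' t :=
  stmt_11_general n R M hpart κ Tl Tl1 c c' hcM hc'M hcR x x' hxR hxM hx'R hx'M h0
end

section
/- Let I ⊆ ℝ be a nonempty open interval, κ > 0, and y : I → (0, ∞) a function. Suppose there exist an integer n ≥ 1, pairwise distinct reals c_1,…,c_n > 0, a constant x̄ ∈ ℝ, and differentiable functions x̂_1,…,x̂_n : I → (0, ∞) such that x̂_i′(t) = −κ c_i y(t) x̂_i(t) and y(t) = 1 − Σ_{i=1}^n x̂_i(t) − x̄ for all t ∈ I. If y also admits a second such representation with data (n′, c′_1,…,c′_{n′}, x̄′, x̂′_1,…,x̂′_{n′}) and the same κ, then n = n′, the sets {c_1,…,c_n} and {c′_1,…,c′_{n′}} are equal, and x̄ = x̄′. -/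
/-!
Let `Z` be an antiderivative of `-κ y`. The ODE `x̂ᵢ' = cᵢ Z' x̂ᵢ` forces `x̂ᵢ = Aᵢ exp (cᵢ Z)` with
`Aᵢ > 0`, so along `u = Z t`, which sweeps an open interval because `Z` is strictly decreasing,
`∑ Aᵢ e^{cᵢ u} + x̄ = ∑ A'ⱼ e^{c'ⱼ u} + x̄'`. Exponentials with distinct frequencies are linearly
independent on any nonempty open set: differentiating `m` times at one point gives a Vandermonde
system. Comparing coefficients, frequency `0` yields `x̄ = x̄'`, and since the `Aᵢ` are positive the
nonzero frequencies with a nonzero coefficient are exactly the `cᵢ`.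
-/

open Set Real

theorem Finset.eq_zero_of_forall_sum_mul_pow_eq_zero {R : Type*} [CommRing R] [IsDomain R]
    {S : Finset R} {w : R → R} (h : ∀ m : ℕ, ∑ r ∈ S, w r * r ^ m = 0) :
    ∀ r ∈ S, w r = 0 := by
  let e := S.equivFin
  have hw : (fun k => w (e.symm k)) = 0 :=
    Matrix.eq_zero_of_forall_pow_sum_mul_pow_eq_zero (f := fun k => (e.symm k : R))
      (Subtype.val_injective.comp e.symm.injective) fun m =>
        (e.symm.sum_comp fun r : S => w r * (r : R) ^ (m : ℕ)).trans
          ((Finset.sum_coe_sort S _).trans (h m))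
  intro r hr
  simpa [e] using congrFun hw (e ⟨r, hr⟩)

section ExpSum

variable {U : Set ℝ} {S : Finset ℝ} {d : ℝ → ℝ}

theorem sum_mul_mul_exp_eq_zero (hU : IsOpen U) (h : ∀ u ∈ U, ∑ r ∈ S, d r * exp (r * u) = 0)
    {u : ℝ} (hu : u ∈ U) : ∑ r ∈ S, d r * r * exp (r * u) = 0 := by
  have hderiv : HasDerivAt (fun u => ∑ r ∈ S, d r * exp (r * u))
      (∑ r ∈ S, d r * r * exp (r * u)) u :=
    HasDerivAt.fun_sum fun r _ =>
      ((((hasDerivAt_id' u).const_mul r).exp).const_mul (d r)).congr_deriv (by ring)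
  have hzero : HasDerivAt (fun u => ∑ r ∈ S, d r * exp (r * u)) 0 u :=
    (hasDerivAt_const u 0).congr_of_eventuallyEq (Filter.eventually_of_mem (hU.mem_nhds hu) h)
  exact hderiv.unique hzero

theorem sum_mul_pow_mul_exp_eq_zero (hU : IsOpen U)
    (h : ∀ u ∈ U, ∑ r ∈ S, d r * exp (r * u) = 0) (m : ℕ) :
    ∀ u ∈ U, ∑ r ∈ S, d r * r ^ m * exp (r * u) = 0 := by
  induction m with
  | zero => simpa using h
  | succ m ih =>
    intro u hu
    simpa only [pow_succ, mul_assoc] using sum_mul_mul_exp_eq_zero hU ih hu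

theorem linearIndependent_exp_mul (hU : IsOpen U) (hne : U.Nonempty) :
    LinearIndependent ℝ (fun r : ℝ => fun u : U => exp (r * u)) := by
  rw [linearIndependent_iff']
  intro S d hd r hr
  obtain ⟨u₀, hu₀⟩ := hne
  have hvanish : ∀ u ∈ U, ∑ r ∈ S, d r * exp (r * u) = 0 := fun u hu => by
    simpa using congrFun hd ⟨u, hu⟩
  have hcoeff : d r * exp (r * u₀) = 0 :=
    Finset.eq_zero_of_forall_sum_mul_pow_eq_zero (w := fun r => d r * exp (r * u₀))
      (fun m => by
        simpa only [mul_right_comm] using sum_mul_pow_mul_exp_eq_zero hU hvanish m u₀ hu₀) r hr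
  exact (mul_eq_zero.1 hcoeff).resolve_right (exp_pos _).ne'

end ExpSum

section ExpSumCoeffs

variable {ι ι' : Type*} [Fintype ι] [Fintype ι']

noncomputable def expSumCoeffs (A c : ι → ℝ) (x₀ : ℝ) : ℝ →₀ ℝ :=
  ∑ i, Finsupp.single (c i) (A i) + Finsupp.single 0 x₀

theorem linearCombination_expSumCoeffs (U : Set ℝ) (A c : ι → ℝ) (x₀ : ℝ) :
    Finsupp.linearCombination ℝ (fun r : ℝ => fun u : U => exp (r * u)) (expSumCoeffs A c x₀) =
      fun u : U => ∑ i, A i * exp (c i * u) + x₀ := by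
  ext u
  simp [expSumCoeffs, map_sum, Finsupp.linearCombination_single]

theorem expSumCoeffs_apply_zero (A : ι → ℝ) {c : ι → ℝ} (hc : ∀ i, c i ≠ 0) (x₀ : ℝ) :
    expSumCoeffs A c x₀ 0 = x₀ := by
  simp [expSumCoeffs, hc]

theorem range_eq_setOf_expSumCoeffs_ne_zero {A c : ι → ℝ} (hA : ∀ i, 0 < A i)
    (hc : ∀ i, c i ≠ 0) (x₀ : ℝ) :
    range c = {r | r ≠ 0 ∧ expSumCoeffs A c x₀ r ≠ 0} := by
  ext r
  simp only [mem_range, mem_ofPred_eq, expSumCoeffs, Finsupp.add_apply, Finsupp.finsetSum_apply,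
    Finsupp.single_apply]
  constructor
  · rintro ⟨i, rfl⟩
    refine ⟨hc i, ?_⟩
    rw [if_neg (hc i).symm, add_zero]
    refine (Finset.sum_pos' (fun j _ => ?_) ⟨i, Finset.mem_univ i, by simp [hA i]⟩).ne'
    split_ifs <;> simp [(hA j).le]
  · rintro ⟨hr, hsum⟩
    by_contra! hnot
    exact hsum (by simp [hnot, Ne.symm hr])

theorem range_eq_and_eq_of_sum_mul_exp_add_eqOn {U : Set ℝ} (hU : IsOpen U) (hne : U.Nonempty)
    {A c : ι → ℝ} {A' c' : ι' → ℝ} {x₀ x₀' : ℝ} (hA : ∀ i, 0 < A i) (hA' : ∀ i, 0 < A' i)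
    (hc : ∀ i, c i ≠ 0) (hc' : ∀ i, c' i ≠ 0)
    (h : ∀ u ∈ U, ∑ i, A i * exp (c i * u) + x₀ = ∑ i, A' i * exp (c' i * u) + x₀') :
    range c = range c' ∧ x₀ = x₀' := by
  have hcoeffs : expSumCoeffs A c x₀ = expSumCoeffs A' c' x₀' := by
    refine linearIndependent_exp_mul hU hne ?_
    rw [linearCombination_expSumCoeffs U A c, linearCombination_expSumCoeffs U A' c']
    ext ⟨u, hu⟩
    exact h u hu
  refine ⟨?_, ?_⟩
  · rw [range_eq_setOf_expSumCoeffs_ne_zero hA hc x₀,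
      range_eq_setOf_expSumCoeffs_ne_zero hA' hc' x₀', hcoeffs]
  · rw [← expSumCoeffs_apply_zero A hc x₀, ← expSumCoeffs_apply_zero A' hc' x₀', hcoeffs]

end ExpSumCoeffs

theorem ContinuousOn.exists_hasDerivAt {s : Set ℝ} {y : ℝ → ℝ} (hy : ContinuousOn y s)
    (hs : IsOpen s) (hs' : s.OrdConnected) : ∃ Y : ℝ → ℝ, ∀ t ∈ s, HasDerivAt Y (y t) t := by
  rcases s.eq_empty_or_nonempty with rfl | ⟨t₀, ht₀⟩
  · exact ⟨0, by simp⟩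
  refine ⟨fun t => ∫ τ in t₀..t, y τ, fun t ht => ?_⟩
  exact intervalIntegral.integral_hasDerivAt_right
    (hy.mono (hs'.uIcc_subset ht₀ ht)).intervalIntegrable
    (hy.stronglyMeasurableAtFilter hs t ht) (hy.continuousAt (hs.mem_nhds ht))

theorem IsOpen.exists_eq_mul_exp_of_hasDerivAt {s : Set ℝ} (hs : IsOpen s)
    (hs' : IsPreconnected s) {x g G : ℝ → ℝ} (hG : ∀ t ∈ s, HasDerivAt G (g t) t)
    (hx : ∀ t ∈ s, HasDerivAt x (g t * x t) t) : ∃ A, ∀ t ∈ s, x t = A * exp (G t) := by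
  have hderiv : ∀ t ∈ s, HasDerivAt (fun t => x t * exp (-G t)) 0 t := fun t ht =>
    ((hx t ht).mul (hG t ht).neg.exp).congr_deriv (by ring)
  obtain ⟨A, hA⟩ := hs.exists_is_const_of_deriv_eq_zero hs'
    (fun t ht => (hderiv t ht).differentiableAt.differentiableWithinAt)
    (fun t ht => (hderiv t ht).deriv)
  refine ⟨A, fun t ht => ?_⟩
  rw [← hA t ht, mul_assoc, ← exp_add, neg_add_cancel, exp_zero, mul_one]

theorem ContinuousOn.nonempty_interior_image_Ioo {a b : ℝ} (hab : a < b) {f : ℝ → ℝ}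
    (hf : ContinuousOn f (Ioo a b)) (hinj : InjOn f (Ioo a b)) :
    (interior (f '' Ioo a b)).Nonempty := by
  obtain ⟨t₁, ht₁a, ht₁b⟩ := exists_between hab
  obtain ⟨t₂, ht₁₂, ht₂b⟩ := exists_between ht₁b
  have ht₁ : t₁ ∈ Ioo a b := ⟨ht₁a, ht₁b⟩
  have ht₂ : t₂ ∈ Ioo a b := ⟨ht₁a.trans ht₁₂, ht₂b⟩
  have hsub : Ioo (min (f t₁) (f t₂)) (max (f t₁) (f t₂)) ⊆ f '' Ioo a b :=
    Ioo_subset_Icc_self.trans <| (isPreconnected_Ioo.image f hf).ordConnected.uIcc_subset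
      (mem_image_of_mem f ht₁) (mem_image_of_mem f ht₂)
  exact (nonempty_Ioo.2 (min_lt_max.2 fun h => ht₁₂.ne (hinj ht₁ ht₂ h))).mono
    (interior_maximal hsub isOpen_Ioo)

theorem exists_pos_eq_mul_exp_mul_of_hasDerivAt {ι : Type*} {s : Set ℝ} (hs : IsOpen s)
    (hs' : IsPreconnected s) {t₀ : ℝ} (ht₀ : t₀ ∈ s) {κ : ℝ} {y Z : ℝ → ℝ}
    (hZ : ∀ t ∈ s, HasDerivAt Z (-κ * y t) t) {c : ι → ℝ} {x : ι → ℝ → ℝ}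
    (hpos : ∀ i, ∀ t ∈ s, 0 < x i t)
    (hode : ∀ i, ∀ t ∈ s, HasDerivAt (x i) (-κ * c i * y t * x i t) t) :
    ∃ A : ι → ℝ, (∀ i, 0 < A i) ∧ ∀ i, ∀ t ∈ s, x i t = A i * exp (c i * Z t) := by
  choose A hA using fun i => hs.exists_eq_mul_exp_of_hasDerivAt hs'
    (G := fun t => c i * Z t) (g := fun t => c i * (-κ * y t))
    (fun t ht => (hZ t ht).const_mul (c i)) (fun t ht => (hode i t ht).congr_deriv (by ring))
  refine ⟨A, fun i => pos_of_mul_pos_left ?_ (exp_pos (c i * Z t₀)).le, hA⟩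
  exact hA i t₀ ht₀ ▸ hpos i t₀ ht₀

theorem stmt_12_general (a b : ℝ) (hab : a < b) (κ : ℝ) (hκ : 0 < κ) (y : ℝ → ℝ)
    (hypos : ∀ t ∈ Set.Ioo a b, 0 < y t)
    (n n' : ℕ)
    (c : Fin n → ℝ) (c' : Fin n' → ℝ)
    (hc : ∀ i, 0 < c i) (hc' : ∀ i, 0 < c' i)
    (hcd : Function.Injective c) (hcd' : Function.Injective c')
    (xbar xbar' : ℝ)
    (x : Fin n → ℝ → ℝ) (x' : Fin n' → ℝ → ℝ)
    (hxpos : ∀ i, ∀ t ∈ Set.Ioo a b, 0 < x i t)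
    (hx'pos : ∀ i, ∀ t ∈ Set.Ioo a b, 0 < x' i t)
    (hxode : ∀ i, ∀ t ∈ Set.Ioo a b, HasDerivAt (x i) (-κ * c i * y t * x i t) t)
    (hx'ode : ∀ i, ∀ t ∈ Set.Ioo a b, HasDerivAt (x' i) (-κ * c' i * y t * x' i t) t)
    (hrep : ∀ t ∈ Set.Ioo a b, y t = 1 - (∑ i, x i t) - xbar)
    (hrep' : ∀ t ∈ Set.Ioo a b, y t = 1 - (∑ i, x' i t) - xbar') :
    n = n' ∧ Set.range c = Set.range c' ∧ xbar = xbar' := by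
  have hy : ContinuousOn y (Ioo a b) := fun t ht => by
    have hsum : ContinuousAt (fun t => ∑ i, x i t) t :=
      (HasDerivAt.fun_sum fun i _ => hxode i t ht).continuousAt
    have hrhs : ContinuousAt (fun t => 1 - ∑ i, x i t - xbar) t :=
      (continuousAt_const.sub hsum).sub continuousAt_const
    exact (hrhs.congr (Filter.eventually_of_mem (isOpen_Ioo.mem_nhds ht)
      fun s hs => (hrep s hs).symm)).continuousWithinAt
  obtain ⟨Z, hZ⟩ : ∃ Z : ℝ → ℝ, ∀ t ∈ Ioo a b, HasDerivAt Z (-κ * y t) t :=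
    (continuousOn_const.mul hy).exists_hasDerivAt isOpen_Ioo ordConnected_Ioo
  have hZcont : ContinuousOn Z (Ioo a b) := fun t ht => (hZ t ht).continuousAt.continuousWithinAt
  have hZanti : StrictAntiOn Z (Ioo a b) :=
    strictAntiOn_of_hasDerivWithinAt_neg (convex_Ioo a b) hZcont
      (fun t ht => (hZ t (interior_subset ht)).hasDerivWithinAt) fun t ht => by
        linarith [mul_pos hκ (hypos t (interior_subset ht))]
  have hmid : (a + b) / 2 ∈ Ioo a b := ⟨by linarith, by linarith⟩
  obtain ⟨A, hA, hxA⟩ := exists_pos_eq_mul_exp_mul_of_hasDerivAt isOpen_Ioo isPreconnected_Ioo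
    hmid hZ hxpos hxode
  obtain ⟨A', hA', hx'A'⟩ := exists_pos_eq_mul_exp_mul_of_hasDerivAt isOpen_Ioo
    isPreconnected_Ioo hmid hZ hx'pos hx'ode
  obtain ⟨hrange, hxbar⟩ := range_eq_and_eq_of_sum_mul_exp_add_eqOn isOpen_interior
    (hZcont.nonempty_interior_image_Ioo hab hZanti.injOn) hA hA' (fun i => (hc i).ne')
    (fun i => (hc' i).ne') (x₀ := xbar) (x₀' := xbar') fun u hu => by
      obtain ⟨t, ht, rfl⟩ := interior_subset hu
      rw [← Finset.sum_congr rfl fun i _ => hxA i t ht,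
        ← Finset.sum_congr rfl fun i _ => hx'A' i t ht]
      linarith [hrep t ht, hrep' t ht]
  refine ⟨?_, hrange, hxbar⟩
  simpa [Set.card_range_of_injective hcd, Set.card_range_of_injective hcd'] using
    congrArg (fun s : Set ℝ => Nat.card s) hrange

/-- On a vaccine-surplus subinterval where no rationalist group has a positive payoff:
if the positive output `y` admits two representations
`y = 1 − Σ_i x̂_i − x̄` with positive functions `x̂_i` satisfying `x̂_i′ = −κ c_i y x̂_i`
for pairwise distinct positive payoffs `c_i` (and the same `κ > 0`), then the number of
groups, the set of payoff values, and the constant `x̄` are the same in both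
representations. -/
theorem stmt_12 (a b : ℝ) (hab : a < b) (κ : ℝ) (hκ : 0 < κ) (y : ℝ → ℝ)
    (hypos : ∀ t ∈ Set.Ioo a b, 0 < y t)
    (n n' : ℕ) (hn : 1 ≤ n) (hn' : 1 ≤ n')
    (c : Fin n → ℝ) (c' : Fin n' → ℝ)
    (hc : ∀ i, 0 < c i) (hc' : ∀ i, 0 < c' i)
    (hcd : Function.Injective c) (hcd' : Function.Injective c')
    (xbar xbar' : ℝ)
    (x : Fin n → ℝ → ℝ) (x' : Fin n' → ℝ → ℝ)
    (hxpos : ∀ i, ∀ t ∈ Set.Ioo a b, 0 < x i t)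
    (hx'pos : ∀ i, ∀ t ∈ Set.Ioo a b, 0 < x' i t)
    (hxode : ∀ i, ∀ t ∈ Set.Ioo a b, HasDerivAt (x i) (-κ * c i * y t * x i t) t)
    (hx'ode : ∀ i, ∀ t ∈ Set.Ioo a b, HasDerivAt (x' i) (-κ * c' i * y t * x' i t) t)
    (hrep : ∀ t ∈ Set.Ioo a b, y t = 1 - (∑ i, x i t) - xbar)
    (hrep' : ∀ t ∈ Set.Ioo a b, y t = 1 - (∑ i, x' i t) - xbar') :
    n = n' ∧ Set.range c = Set.range c' ∧ xbar = xbar' :=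
  stmt_12_general a b hab κ hκ y hypos n n' c c' hc hc' hcd hcd' xbar xbar' x x' hxpos hx'pos hxode
    hx'ode hrep hrep'
end

section
/- Let I ⊆ ℝ be a nonempty open interval, κ > 0, and y : I → (0, ∞) a function. Suppose there exist an integer n ≥ 1, pairwise distinct reals c_1,…,c_n > 0, a constant x̄ ∈ ℝ, and differentiable functions x̂_1,…,x̂_n, r : I → (0, ∞) such that x̂_i′(t) = −κ c_i y(t) x̂_i(t), r′(t) = −κ r(t), and y(t) = 1 − Σ_{i=1}^n x̂_i(t) − r(t) − x̄ for all t ∈ I. If y also admits a second such representation with data (n′, c′_1,…,c′_{n′}, x̄′, x̂′_i, r′) and the same κ, then n = n′ and the sets {c_1,…,c_n} and {c′_1,…,c′_{n′}} are equal. -/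
open Real Set Filter Topology AddMonoidAlgebra
open scoped NNReal

/-!
Put `s = φ t` with `φ' = -κ y`. Each imitative group is then `x̂ᵢ(t₀) e^{cᵢ s}`, so `∑ᵢ x̂ᵢ` is an
exponential polynomial in `s` whose frequencies are the payoffs, while
`r = r(t₀) e^{-κ (t - t₀)}`. Since `y > 0`, `φ` sweeps out an interval, on which an exponential
polynomial determines its coefficients (analytic continuation and Dedekind's independence of
characters). Subtracting the two representations gives `N(s) = (r'(t₀) - r(t₀)) e^{-κ (t - t₀)}`
for an exponential polynomial `N`. If `r(t₀) = r'(t₀)`, then `N = 0` and the two sums coincide.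
Otherwise `e^{-κ (t - t₀)}`, hence `y`, is an exponential polynomial `W` in `s`, and
differentiating gives `W · N' = N`. Comparing top frequencies forces `W` to be constant, which
makes the two sums proportional.
-/

/-- Exponential polynomials `∑ aₑ exp (e s)`; frequencies are taken in `ℝ≥0` so that
`AddMonoidAlgebra.supDegree` applies. -/
abbrev ExpPoly := AddMonoidAlgebra ℝ ℝ≥0

namespace ExpPoly

noncomputable def eval (s : ℝ) : ExpPoly →ₐ[ℝ] ℝ :=
  lift ℝ ℝ ℝ≥0
    { toFun := fun e => exp (e.toAdd * s)
      map_one' := by simp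
      map_mul' := fun e f => by simp [add_mul, exp_add] }

theorem eval_single (s : ℝ) (e : ℝ≥0) (a : ℝ) : eval s (single e a) = a * exp (e * s) := by
  simp [eval]

theorem eval_eq_sum (s : ℝ) (P : ExpPoly) {T : Finset ℝ≥0} (hT : P.coeff.support ⊆ T) :
    eval s P = ∑ e ∈ T, P.coeff e * exp (e * s) := by
  rw [eval, lift_apply, Finsupp.sum_of_support_subset _ hT _ (by simp)]
  rfl

noncomputable def derivative (P : ExpPoly) : ExpPoly :=
  ofCoeff (Finsupp.ofSupportFinite (fun e => (e : ℝ) * P.coeff e)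
    (P.coeff.hasFiniteSupport.subset (Function.support_mul_subset_right _ _)))

@[simp]
theorem coeff_derivative (P : ExpPoly) (e : ℝ≥0) : (derivative P).coeff e = e * P.coeff e := rfl

theorem support_derivative_subset (P : ExpPoly) :
    (derivative P).coeff.support ⊆ P.coeff.support := by
  intro e
  simp_all

theorem hasDerivAt_eval (P : ExpPoly) (s : ℝ) :
    HasDerivAt (fun s => eval s P) (eval s (derivative P)) s := by
  simp_rw [eval_eq_sum _ P subset_rfl, eval_eq_sum s _ (support_derivative_subset P)]
  refine HasDerivAt.fun_sum fun e _ => ?_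
  refine ((((hasDerivAt_id' s).const_mul (e : ℝ)).exp).const_mul (P.coeff e)).congr_deriv ?_
  rw [coeff_derivative]
  ring

theorem supDegree_derivative (P : ExpPoly) : (derivative P).supDegree id = P.supDegree id := by
  refine le_antisymm (Finset.sup_mono (support_derivative_subset P)) (Finset.sup_le fun e he => ?_)
  rcases eq_or_ne e 0 with rfl | he0
  · exact bot_le
  · exact Finset.le_sup (f := id) (by simpa [he0] using he)

theorem eq_zero_of_eventually_eval_eq_zero {P : ExpPoly} {s₀ : ℝ}
    (h : ∀ᶠ s in 𝓝 s₀, eval s P = 0) : P = 0 := by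
  have hana : AnalyticOnNhd ℝ (fun s => eval s P) univ := fun s _ => by
    simp_rw [eval_eq_sum _ P subset_rfl]
    fun_prop
  have hzero := hana.eqOn_zero_of_preconnected_of_eventuallyEq_zero isPreconnected_univ
    (mem_univ s₀) h
  let χ : ℝ≥0 → Multiplicative ℝ →* ℝ := fun e =>
    { toFun := fun s => exp (e * s.toAdd)
      map_one' := by simp
      map_mul' := fun s t => by simp [mul_add, exp_add] }
  have hχ : Function.Injective χ := fun e f hef => by
    have := DFunLike.congr_fun hef (Multiplicative.ofAdd 1)
    simpa [χ] using this
  have hli := (linearIndependent_monoidHom (Multiplicative ℝ) ℝ).comp χ hχ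
  have := linearIndependent_iff.1 hli P.coeff (funext fun s => ?_)
  · exact AddMonoidAlgebra.coeff_eq_zero.1 this
  · simp only [Finsupp.linearCombination_apply, Finsupp.sum, Finset.sum_apply]
    simpa [eval, lift_apply, Finsupp.sum, χ, mul_comm] using hzero (mem_univ s.toAdd)

theorem eq_zero_of_eval_comp_eq_zero {U : Set ℝ} (hU : IsOpen U) (hU' : IsPreconnected U)
    {φ : ℝ → ℝ} (hφ : ContinuousOn φ U) {t₀ d : ℝ} (ht₀ : t₀ ∈ U) (hd : d ≠ 0)
    (hφ₀ : HasDerivAt φ d t₀) {P : ExpPoly} (h : ∀ t ∈ U, eval (φ t) P = 0) : P = 0 := by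
  obtain ⟨t, ht, hne⟩ : ∃ t ∈ U, φ t ≠ φ t₀ := by
    by_contra! hconst
    exact hd (hφ₀.unique ((hasDerivAt_const t₀ (φ t₀)).congr_of_eventuallyEq
      (eventually_of_mem (hU.mem_nhds ht₀) hconst)))
  have key : ∀ u ∈ U, ∀ v ∈ U, φ u < φ v → P = 0 := fun u hu v hv huv => by
    refine eq_zero_of_eventually_eval_eq_zero (s₀ := (φ u + φ v) / 2) ?_
    filter_upwards [Ioo_mem_nhds (a := φ u) (b := φ v) (by linarith) (by linarith)] with s hs
    obtain ⟨w, hw, rfl⟩ := (hU'.image φ hφ).Icc_subset (mem_image_of_mem φ hu)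
      (mem_image_of_mem φ hv) (Ioo_subset_Icc_self hs)
    exact h w hw
  rcases hne.lt_or_gt with hlt | hlt
  exacts [key t ht t₀ ht₀ hlt, key t₀ ht₀ t ht hlt]

theorem coeff_eq_zero_or_coeff_eq_zero_of_mul_derivative_eq {W N : ExpPoly}
    (h : W * derivative N = N) :
    (∀ e ≠ 0, W.coeff e = 0) ∨ (∀ e ≠ 0, N.coeff e = 0) := by
  by_cases hN' : derivative N = 0
  · refine Or.inr fun e he => ?_
    have := congrArg (fun P : ExpPoly => P.coeff e) hN'
    simpa [he] using this
  by_cases hW : W = 0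
  · exact Or.inl fun e _ => by simp [hW]
  left
  have hdeg := supDegree_mul (D := id) Function.injective_id (fun _ _ => rfl)
    (mul_ne_zero ((leadingCoeff_ne_zero Function.injective_id).2 hW)
      ((leadingCoeff_ne_zero Function.injective_id).2 hN')) hW hN'
  rw [h, ← supDegree_derivative, right_eq_add] at hdeg
  intro e he
  refine coeff_eq_zero_of_not_le_supDegree (D := id) ?_
  rw [hdeg, id, nonpos_iff_eq_zero]
  exact he

theorem support_eq_of_forall_mul_coeff_eq {S S' : ExpPoly} (hS : S.coeff 0 = 0)
    (hS' : S'.coeff 0 = 0) {α β : ℝ} (hα : α ≠ 0) (hβ : β ≠ 0)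
    (h : ∀ e ≠ 0, α * S.coeff e = β * S'.coeff e) : S.coeff.support = S'.coeff.support := by
  ext e
  rcases eq_or_ne e 0 with rfl | he
  · simp [hS, hS']
  · have hiff : α * S.coeff e = 0 ↔ β * S'.coeff e = 0 := by rw [h e he]
    simp only [Finsupp.mem_support_iff]
    exact not_congr (by simpa [hα, hβ] using hiff)

theorem support_eq_of_mul_derivative_eq {S S' : ExpPoly} (hS : S.coeff 0 = 0)
    (hS' : S'.coeff 0 = 0) {k q Δ : ℝ} (hq₀ : q ≠ 0) (hq₁ : q ≠ 1)
    (h : (single 0 k - S + q • (S - S' + single 0 Δ)) * derivative (S - S' + single 0 Δ) =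
      S - S' + single 0 Δ) :
    S.coeff.support = S'.coeff.support := by
  rcases coeff_eq_zero_or_coeff_eq_zero_of_mul_derivative_eq h with hW | hN
  · refine support_eq_of_forall_mul_coeff_eq hS hS' (sub_ne_zero.2 hq₁) hq₀ fun e he => ?_
    have := hW e he
    simp [he.symm] at this
    linarith
  · refine support_eq_of_forall_mul_coeff_eq hS hS' one_ne_zero one_ne_zero fun e he => ?_
    have := hN e he
    simp [he.symm] at this
    linarith

noncomputable def expPoly {ι : Type*} [Fintype ι] (c : ι → ℝ≥0) (w : ι → ℝ) : ExpPoly :=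
  ∑ i, single (c i) (w i)

section expPoly

variable {ι : Type*} [Fintype ι] {c : ι → ℝ≥0} {w : ι → ℝ}

theorem eval_expPoly (s : ℝ) : eval s (expPoly c w) = ∑ i, w i * exp (c i * s) := by
  simp [expPoly, eval_single]

theorem coeff_expPoly_zero (hc : ∀ i, c i ≠ 0) : (expPoly c w).coeff 0 = 0 := by
  simp [expPoly, hc]

theorem support_expPoly [DecidableEq ι] (hc : Function.Injective c) (hw : ∀ i, w i ≠ 0) :
    (expPoly c w).coeff.support = Finset.univ.image c := by
  rw [expPoly, coeff_sum, Finsupp.support_sum_eq_biUnion]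
  · simp [Finsupp.support_single _ (hw _), Finset.biUnion_singleton]
  · intro i j hij
    simpa [Finsupp.support_single _ (hw _)] using hc.ne hij

end expPoly

end ExpPoly

open ExpPoly

theorem exists_hasDerivAt_of_continuousOn_Ioo {f : ℝ → ℝ} {a b t₀ : ℝ} (ht₀ : t₀ ∈ Ioo a b)
    (hf : ContinuousOn f (Ioo a b)) :
    ∃ F : ℝ → ℝ, F t₀ = 0 ∧ ∀ t ∈ Ioo a b, HasDerivAt F (f t) t := by
  refine ⟨fun t => ∫ u in t₀..t, f u, intervalIntegral.integral_same, fun t ht => ?_⟩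
  exact intervalIntegral.integral_hasDerivAt_right
    (hf.mono (ordConnected_Ioo.uIcc_subset ht₀ ht)).intervalIntegrable
    (hf.stronglyMeasurableAtFilter isOpen_Ioo t ht) (hf.continuousAt (Ioo_mem_nhds ht.1 ht.2))

theorem eq_mul_exp_sub_of_hasDerivAt {U : Set ℝ} (hU : IsOpen U) (hU' : IsPreconnected U)
    {f G g : ℝ → ℝ} (hG : ∀ t ∈ U, HasDerivAt G (g t) t)
    (hf : ∀ t ∈ U, HasDerivAt f (g t * f t) t) {t₀ t : ℝ} (ht₀ : t₀ ∈ U) (ht : t ∈ U) :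
    f t = f t₀ * exp (G t - G t₀) := by
  have hderiv : ∀ u ∈ U, HasDerivAt (fun u => f u * exp (-G u)) 0 u := fun u hu => by
    refine ((hf u hu).fun_mul (hG u hu).fun_neg.exp).congr_deriv ?_
    ring
  have hconst := hU.is_const_of_deriv_eq_zero hU'
    (fun u hu => (hderiv u hu).differentiableAt.differentiableWithinAt)
    (fun u hu => (hderiv u hu).deriv) ht ht₀
  calc f t = f t * exp (-G t) * exp (G t) := by rw [mul_assoc, ← exp_add]; simp
    _ = f t₀ * exp (G t - G t₀) := by rw [hconst, mul_assoc, ← exp_add, neg_add_eq_sub]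

theorem eq_sub_eval_expPoly_sub_mul_exp {ι : Type*} [Fintype ι] {U : Set ℝ} (hU : IsOpen U)
    (hU' : IsPreconnected U) {κ t₀ : ℝ} (ht₀ : t₀ ∈ U) {y φ : ℝ → ℝ}
    (hφ : ∀ t ∈ U, HasDerivAt φ (-κ * y t) t) (hφ₀ : φ t₀ = 0) {c : ι → ℝ≥0}
    {x : ι → ℝ → ℝ} {r : ℝ → ℝ} {xbar : ℝ}
    (hx : ∀ i, ∀ t ∈ U, HasDerivAt (x i) (-κ * c i * y t * x i t) t)
    (hr : ∀ t ∈ U, HasDerivAt r (-κ * r t) t)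
    (hrep : ∀ t ∈ U, y t = 1 - ∑ i, x i t - r t - xbar) :
    ∀ t ∈ U, y t = (1 - xbar) - eval (φ t) (expPoly c fun i => x i t₀)
      - r t₀ * exp (-κ * (t - t₀)) := by
  intro t ht
  have hxt : ∀ i, x i t = x i t₀ * exp (c i * φ t) := fun i => by
    rw [eq_mul_exp_sub_of_hasDerivAt hU hU' (G := fun t => c i * φ t)
      (fun t ht => ((hφ t ht).const_mul (c i : ℝ)).congr_deriv (by ring)) (hx i) ht₀ ht, hφ₀,
      mul_zero, sub_zero]
  have hrt : r t = r t₀ * exp (-κ * (t - t₀)) := by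
    rw [eq_mul_exp_sub_of_hasDerivAt hU hU' (fun t _ => hasDerivAt_mul_const (-κ)) hr ht₀ ht]
    ring_nf
  rw [hrep t ht, eval_expPoly, hrt, Finset.sum_congr rfl fun i _ => hxt i]
  ring

theorem mul_eval_derivative_eq_of_eval_eq {U : Set ℝ} (hU : IsOpen U) {κ A t₀ : ℝ}
    (hκ : κ ≠ 0) {φ y : ℝ → ℝ} (hφ : ∀ t ∈ U, HasDerivAt φ (-κ * y t) t) {N : ExpPoly}
    (hN : ∀ t ∈ U, eval (φ t) N = A * exp (-κ * (t - t₀))) {t : ℝ} (ht : t ∈ U) :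
    y t * eval (φ t) (derivative N) = eval (φ t) N := by
  have hlhs := (hasDerivAt_eval N (φ t)).comp t (hφ t ht)
  have hrhs := ((((hasDerivAt_id' t).sub_const t₀).const_mul (-κ)).exp).const_mul A
  have := hlhs.unique (hrhs.congr_of_eventuallyEq (eventually_of_mem (hU.mem_nhds ht) hN))
  rw [hN t ht]
  apply mul_left_cancel₀ (neg_ne_zero.2 hκ)
  linear_combination this

theorem support_eq_of_two_representations {U : Set ℝ} (hU : IsOpen U) (hU' : IsPreconnected U)
    {κ t₀ : ℝ} (ht₀ : t₀ ∈ U) (hκ : κ ≠ 0) {y φ : ℝ → ℝ} (hy₀ : y t₀ ≠ 0)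
    (hφ : ∀ t ∈ U, HasDerivAt φ (-κ * y t) t) {S S' : ExpPoly} (hS : S.coeff 0 = 0)
    (hS' : S'.coeff 0 = 0) {k k' ρ ρ' : ℝ} (hρ : ρ ≠ 0) (hρ' : ρ' ≠ 0)
    (hy : ∀ t ∈ U, y t = k - eval (φ t) S - ρ * exp (-κ * (t - t₀)))
    (hy' : ∀ t ∈ U, y t = k' - eval (φ t) S' - ρ' * exp (-κ * (t - t₀))) :
    S.coeff.support = S'.coeff.support := by
  have hinj : ∀ P, (∀ t ∈ U, eval (φ t) P = 0) → P = 0 := fun P =>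
    eq_zero_of_eval_comp_eq_zero hU hU' (fun t ht => (hφ t ht).continuousAt.continuousWithinAt)
      ht₀ (mul_ne_zero (neg_ne_zero.2 hκ) hy₀) (hφ t₀ ht₀)
  set N := S - S' + single 0 (k' - k) with hNdef
  have hN : ∀ t ∈ U, eval (φ t) N = (ρ' - ρ) * exp (-κ * (t - t₀)) := fun t ht => by
    simp only [N, map_add, map_sub, eval_single, NNReal.coe_zero, zero_mul, exp_zero, mul_one]
    linear_combination hy t ht - hy' t ht
  by_cases hρρ' : ρ = ρ'
  · have hN0 : N = 0 := hinj N fun t ht => by rw [hN t ht, hρρ', sub_self, zero_mul]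
    refine support_eq_of_forall_mul_coeff_eq hS hS' one_ne_zero one_ne_zero fun e he => ?_
    have := congrArg (fun P : ExpPoly => P.coeff e) hN0
    simp [N, he.symm] at this
    linarith
  have hD : ρ - ρ' ≠ 0 := sub_ne_zero.2 hρρ'
  -- eliminating `exp (-κ (t - t₀))` from `hy` by `hN`: `y = k - S + q N` with `q = ρ / (ρ - ρ')`
  refine support_eq_of_mul_derivative_eq hS hS' (k := k) (Δ := k' - k) (div_ne_zero hρ hD) ?_
    (sub_eq_zero.1 (hinj _ fun t ht => ?_))
  · rw [Ne, div_eq_one_iff_eq hD]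
    exact fun h => hρ' (by linarith)
  · rw [← hNdef, map_sub, map_mul, ← mul_eval_derivative_eq_of_eval_eq hU hκ hφ hN ht, hy t ht]
    simp only [map_add, map_sub, map_smul, eval_single, NNReal.coe_zero, zero_mul, exp_zero,
      mul_one, smul_eq_mul, hN t ht]
    have hq : ρ / (ρ - ρ') * (ρ' - ρ) = -ρ := by
      field_simp
      ring
    linear_combination (exp (-κ * (t - t₀)) * eval (φ t) (derivative N)) * hq

theorem eq_and_range_eq_of_image_univ_eq {α : Type*} [DecidableEq α] {n m : ℕ}
    {f : Fin n → α} {g : Fin m → α} (hf : Function.Injective f) (hg : Function.Injective g)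
    (h : Finset.univ.image f = Finset.univ.image g) : n = m ∧ range f = range g := by
  refine ⟨?_, ?_⟩
  · simpa [Finset.card_image_of_injective _ hf, Finset.card_image_of_injective _ hg]
      using congrArg Finset.card h
  · simpa using congrArg (fun s : Finset α => (s : Set α)) h

theorem stmt_13_general (a b : ℝ) (hab : a < b) (κ : ℝ) (hκ : 0 < κ) (y : ℝ → ℝ)
    (hypos : ∀ t ∈ Set.Ioo a b, 0 < y t)
    (n n' : ℕ)
    (c : Fin n → ℝ) (c' : Fin n' → ℝ)
    (hc : ∀ i, 0 < c i) (hc' : ∀ i, 0 < c' i)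
    (hcd : Function.Injective c) (hcd' : Function.Injective c')
    (xbar xbar' : ℝ)
    (x : Fin n → ℝ → ℝ) (x' : Fin n' → ℝ → ℝ) (r r' : ℝ → ℝ)
    (hxpos : ∀ i, ∀ t ∈ Set.Ioo a b, 0 < x i t)
    (hx'pos : ∀ i, ∀ t ∈ Set.Ioo a b, 0 < x' i t)
    (hrpos : ∀ t ∈ Set.Ioo a b, 0 < r t)
    (hr'pos : ∀ t ∈ Set.Ioo a b, 0 < r' t)
    (hxode : ∀ i, ∀ t ∈ Set.Ioo a b, HasDerivAt (x i) (-κ * c i * y t * x i t) t)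
    (hx'ode : ∀ i, ∀ t ∈ Set.Ioo a b, HasDerivAt (x' i) (-κ * c' i * y t * x' i t) t)
    (hrode : ∀ t ∈ Set.Ioo a b, HasDerivAt r (-κ * r t) t)
    (hr'ode : ∀ t ∈ Set.Ioo a b, HasDerivAt r' (-κ * r' t) t)
    (hrep : ∀ t ∈ Set.Ioo a b, y t = 1 - (∑ i, x i t) - r t - xbar)
    (hrep' : ∀ t ∈ Set.Ioo a b, y t = 1 - (∑ i, x' i t) - r' t - xbar') :
    n = n' ∧ Set.range c = Set.range c' := by
  classical
  obtain ⟨t₀, ht₀⟩ := nonempty_Ioo.2 hab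
  have hycont : ContinuousOn y (Ioo a b) := fun t ht => by
    have hx := fun i => (hxode i t ht).continuousAt
    have hr := (hrode t ht).continuousAt
    exact (ContinuousAt.continuousWithinAt (by fun_prop)).congr hrep (hrep t ht)
  obtain ⟨φ, hφ₀, hφ⟩ :=
    exists_hasDerivAt_of_continuousOn_Ioo (f := fun t => -κ * y t) ht₀
      (continuousOn_const.mul hycont)
  let p : Fin n → ℝ≥0 := fun i => ⟨c i, (hc i).le⟩
  let p' : Fin n' → ℝ≥0 := fun i => ⟨c' i, (hc' i).le⟩
  have hp : Function.Injective p := fun i j h => hcd (congrArg NNReal.toReal h)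
  have hp' : Function.Injective p' := fun i j h => hcd' (congrArg NNReal.toReal h)
  have hp₀ : ∀ i, p i ≠ 0 := fun i h => (hc i).ne' (congrArg NNReal.toReal h)
  have hp₀' : ∀ i, p' i ≠ 0 := fun i h => (hc' i).ne' (congrArg NNReal.toReal h)
  have hsupp := support_eq_of_two_representations isOpen_Ioo isPreconnected_Ioo ht₀ hκ.ne'
    (hypos t₀ ht₀).ne' hφ (coeff_expPoly_zero hp₀) (coeff_expPoly_zero hp₀') (hrpos t₀ ht₀).ne'
    (hr'pos t₀ ht₀).ne'
    (eq_sub_eval_expPoly_sub_mul_exp (c := p) isOpen_Ioo isPreconnected_Ioo ht₀ hφ hφ₀ hxode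
      hrode hrep)
    (eq_sub_eval_expPoly_sub_mul_exp (c := p') isOpen_Ioo isPreconnected_Ioo ht₀ hφ hφ₀ hx'ode
      hr'ode hrep')
  rw [support_expPoly hp fun i => (hxpos i t₀ ht₀).ne',
    support_expPoly hp' fun i => (hx'pos i t₀ ht₀).ne'] at hsupp
  obtain ⟨hnn, hrange⟩ := eq_and_range_eq_of_image_univ_eq hp hp' hsupp
  exact ⟨hnn, by rw [show c = (↑) ∘ p from rfl, show c' = (↑) ∘ p' from rfl, range_comp,
    range_comp, hrange]⟩

/-- On a vaccine-surplus subinterval where at least one rationalist group and the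
imitative groups with positive payoffs are present: if the positive output `y` admits two
representations `y = 1 − Σ_i x̂_i − r − x̄` with positive `x̂_i` satisfying
`x̂_i′ = −κ c_i y x̂_i` for pairwise distinct positive payoffs `c_i`, positive `r`
satisfying `r′ = −κ r` (and the same `κ > 0`), then the number of imitative groups and
the set of positive imitative payoff values are the same in both representations. -/
theorem stmt_13 (a b : ℝ) (hab : a < b) (κ : ℝ) (hκ : 0 < κ) (y : ℝ → ℝ)
    (hypos : ∀ t ∈ Set.Ioo a b, 0 < y t)
    (n n' : ℕ) (hn : 1 ≤ n) (hn' : 1 ≤ n')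
    (c : Fin n → ℝ) (c' : Fin n' → ℝ)
    (hc : ∀ i, 0 < c i) (hc' : ∀ i, 0 < c' i)
    (hcd : Function.Injective c) (hcd' : Function.Injective c')
    (xbar xbar' : ℝ)
    (x : Fin n → ℝ → ℝ) (x' : Fin n' → ℝ → ℝ) (r r' : ℝ → ℝ)
    (hxpos : ∀ i, ∀ t ∈ Set.Ioo a b, 0 < x i t)
    (hx'pos : ∀ i, ∀ t ∈ Set.Ioo a b, 0 < x' i t)
    (hrpos : ∀ t ∈ Set.Ioo a b, 0 < r t)
    (hr'pos : ∀ t ∈ Set.Ioo a b, 0 < r' t)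
    (hxode : ∀ i, ∀ t ∈ Set.Ioo a b, HasDerivAt (x i) (-κ * c i * y t * x i t) t)
    (hx'ode : ∀ i, ∀ t ∈ Set.Ioo a b, HasDerivAt (x' i) (-κ * c' i * y t * x' i t) t)
    (hrode : ∀ t ∈ Set.Ioo a b, HasDerivAt r (-κ * r t) t)
    (hr'ode : ∀ t ∈ Set.Ioo a b, HasDerivAt r' (-κ * r' t) t)
    (hrep : ∀ t ∈ Set.Ioo a b, y t = 1 - (∑ i, x i t) - r t - xbar)
    (hrep' : ∀ t ∈ Set.Ioo a b, y t = 1 - (∑ i, x' i t) - r' t - xbar') :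
    n = n' ∧ Set.range c = Set.range c' :=
  stmt_13_general a b hab κ hκ y hypos n n' c c' hc hc' hcd hcd' xbar xbar' x x' r r' hxpos hx'pos
    hrpos hr'pos hxode hx'ode hrode hr'ode hrep hrep'
end

section
/- Consider n groups evolving on [t*, T) under piecewise-constant payoffs over subintervals t* = t_0 < t_1 < ⋯ < t_s = T, with continuous unvaccinated proportions x_k : [t*,T) → ℝ satisfying on each open subinterval x_k′(t) = −κ 1(c_k(t_{j−1}) > 0) x_k(t) for rationalist groups k and x_k′(t) = −κ c_k(t_{j−1}) 1(c_k(t_{j−1}) > 0) y(t) x_k(t) for imitative groups k, where y(t) = 1 − Σ_{q=1}^n x_q(t). For t ∈ [t*,T) define η_k(t) = x-free closed-form ratios: η_k(t) = exp(−κ Σ_j (t_j − t_{j−1}) 1(c_k(t_{j−1})>0) − κ (t − t_{q(t)}) 1(c_k(t_{q(t)})>0)) for rationalist k, and η_k(t) = exp(−κ Σ_j c_k(t_{j−1}) 1(c_k(t_{j−1})>0) ∫_{t_{j−1}}^{t_j} y(τ)dτ − κ c_k(t_{q(t)}) 1(c_k(t_{q(t)})>0) ∫_{t_{q(t)}}^{t}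 y(τ)dτ) for imitative k, where q(t) = max{j : t ≥ t_j} and the sums run over completed subintervals before t. Let t̃_1,…,t̃_m ∈ [t*,T) with m ≥ n and let A be the m×n matrix with entries A_{ik} = η_k(t̃_i). Then A · (x_1(t*),…,x_n(t*))ᵀ = (1 − y(t̃_1),…,1 − y(t̃_m))ᵀ, and if A has rank n, then (x_1(t*),…,x_n(t*)) is the unique vector z ∈ ℝ^n with A z = (1 − y(t̃_1),…,1 − y(t̃_m))ᵀ; consequently the proportions of unvaccinated individuals in each group at the vaccine abundance time t* are globally identifiable from the output y. -/
open Classical in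
/-- `q(t) = max{j ≤ s : t_j ≤ t}`, the index of the subinterval containing `t`. -/
noncomputable def qfun (tt : ℕ → ℝ) (s : ℕ) (t : ℝ) : ℕ :=
  Nat.findGreatest (fun j => tt j ≤ t) s

/-- The closed-form ratio `η_k(t) = x_k(t)/x_k(t*)` for a rationalist group with
piecewise-constant payoffs `cg j` on `[t_j, t_{j+1})`. -/
noncomputable def etaR (κ : ℝ) (tt : ℕ → ℝ) (s : ℕ) (cg : ℕ → ℝ) (t : ℝ) : ℝ :=
  Real.exp (-κ * (∑ j ∈ Finset.Icc 1 (qfun tt s t),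
      (tt j - tt (j - 1)) * indR (cg (j - 1))) -
    κ * (t - tt (qfun tt s t)) * indR (cg (qfun tt s t)))

/-- The closed-form ratio `η_k(t) = x_k(t)/x_k(t*)` for an imitative group with
piecewise-constant payoffs `cg j` on `[t_j, t_{j+1})` and output `y`. -/
noncomputable def etaM (κ : ℝ) (tt : ℕ → ℝ) (s : ℕ) (cg : ℕ → ℝ) (y : ℝ → ℝ) (t : ℝ) : ℝ :=
  Real.exp (-κ * (∑ j ∈ Finset.Icc 1 (qfun tt s t),
      cg (j - 1) * indR (cg (j - 1)) * ∫ τ in (tt (j - 1))..(tt j), y τ) -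
    κ * cg (qfun tt s t) * indR (cg (qfun tt s t)) * ∫ τ in (tt (qfun tt s t))..t, y τ)

/-!
On each subinterval of constant payoffs every `x_k` solves a scalar linear ODE
`x' = ρ w x` (with `w ≡ 1` for rationalist and `w = y` for imitative groups), so an
integrating factor gives `x_k(b) = exp (ρ ∫_a^b w) x_k(a)`. Chaining these over the knots
`t_0 < ⋯ < t_q(t) ≤ t` yields `x_k(t) = η_k(t) x_k(t*)`; summing over `k` at the sampling
times gives `A x(t*) = 1 - y`, and a rank-`n` matrix with `n` columns is injective.
-/

open Set MeasureTheory

lemma eq_of_hasDerivAt_eq_zero {h : ℝ → ℝ} {a b : ℝ} (hab : a ≤ b)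
    (hc : ContinuousOn h (Icc a b)) (hd : ∀ t ∈ Ioo a b, HasDerivAt h 0 t) : h b = h a := by
  rcases hab.eq_or_lt with rfl | hlt
  · rfl
  obtain ⟨c, -, hslope⟩ := exists_hasDerivAt_eq_slope h (fun _ => 0) hlt hc hd
  have := (div_eq_zero_iff.mp hslope.symm).resolve_right (sub_ne_zero.mpr hlt.ne')
  linarith

/-- `x * exp (-G)` has derivative zero. -/
lemma linear_ode_eq_exp_mul {x G g : ℝ → ℝ} {a b : ℝ} (hab : a ≤ b)
    (hx : ContinuousOn x (Icc a b)) (hG : ContinuousOn G (Icc a b))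
    (hxd : ∀ t ∈ Ioo a b, HasDerivAt x (g t * x t) t)
    (hGd : ∀ t ∈ Ioo a b, HasDerivAt G (g t) t) :
    x b = Real.exp (G b - G a) * x a := by
  have hconst : x b * Real.exp (-G b) = x a * Real.exp (-G a) :=
    eq_of_hasDerivAt_eq_zero (h := fun t => x t * Real.exp (-G t)) hab (hx.mul hG.neg.rexp)
      fun t ht => ((hxd t ht).fun_mul (hGd t ht).fun_neg.exp).congr_deriv (by ring)
  calc x b = x b * Real.exp (-G b) * Real.exp (G b) := by
        rw [mul_assoc, ← Real.exp_add, neg_add_cancel, Real.exp_zero, mul_one]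
    _ = x a * Real.exp (-G a) * Real.exp (G b) := by rw [hconst]
    _ = Real.exp (G b - G a) * x a := by rw [Real.exp_sub, Real.exp_neg]; ring

lemma linear_ode_eq_exp_integral_mul {x w : ℝ → ℝ} {ρ a b : ℝ} (hab : a ≤ b)
    (hx : ContinuousOn x (Icc a b)) (hw : ContinuousOn w (Icc a b))
    (hxd : ∀ t ∈ Ioo a b, HasDerivAt x (ρ * w t * x t) t) :
    x b = Real.exp (ρ * ∫ τ in a..b, w τ) * x a := by
  have hprim : ContinuousOn (fun t => ∫ τ in a..t, w τ) (Icc a b) := by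
    simpa [uIcc_of_le hab] using intervalIntegral.continuousOn_primitive_interval'
      (hw.intervalIntegrable_of_Icc (μ := volume) hab) left_mem_uIcc
  have hderiv : ∀ t ∈ Ioo a b, HasDerivAt (fun t => ∫ τ in a..t, w τ) (w t) t := fun t ht =>
    intervalIntegral.integral_hasDerivAt_right
      ((hw.mono (Icc_subset_Icc_right ht.2.le)).intervalIntegrable_of_Icc (μ := volume) ht.1.le)
      (hw.stronglyMeasurableAtFilter_nhdsWithin measurableSet_Icc t |>.filter_mono
        (by rw [nhdsWithin_eq_nhds.mpr (Icc_mem_nhds ht.1 ht.2)]))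
      (hw.continuousAt (Icc_mem_nhds ht.1 ht.2))
  simpa using linear_ode_eq_exp_mul hab hx (continuousOn_const.mul hprim) hxd
    fun t ht => (hderiv t ht).const_mul ρ

/-- `∫_{t_0}^{t} ρ(τ) w(τ) dτ` for the rate `ρ i` on `[t_i, t_{i+1})`, when `t` lies in the
`j`-th subinterval `[t_j, t_{j+1}]`. -/
noncomputable def cumulativeExponent (tt ρ : ℕ → ℝ) (w : ℝ → ℝ) (j : ℕ) (t : ℝ) : ℝ :=
  ∑ i ∈ Finset.Icc 1 j, ρ (i - 1) * (∫ τ in tt (i - 1)..tt i, w τ) + ρ j * ∫ τ in tt j..t, w τ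

lemma cumulativeExponent_zero (tt ρ : ℕ → ℝ) (w : ℝ → ℝ) (t : ℝ) :
    cumulativeExponent tt ρ w 0 t = ρ 0 * ∫ τ in tt 0..t, w τ := by
  simp [cumulativeExponent]

lemma cumulativeExponent_succ (tt ρ : ℕ → ℝ) (w : ℝ → ℝ) (j : ℕ) (t : ℝ) :
    cumulativeExponent tt ρ w (j + 1) t =
      cumulativeExponent tt ρ w j (tt (j + 1)) + ρ (j + 1) * ∫ τ in tt (j + 1)..t, w τ := by
  simp [cumulativeExponent, Finset.sum_Icc_succ_top]

lemma qfun_spec {tt : ℕ → ℝ} {s : ℕ} {t : ℝ} (ht : t ∈ Ico (tt 0) (tt s)) :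
    qfun tt s t < s ∧ tt (qfun tt s t) ≤ t ∧ t < tt (qfun tt s t + 1) := by
  classical
  have hspec : tt (qfun tt s t) ≤ t :=
    Nat.findGreatest_spec (P := fun j => tt j ≤ t) (Nat.zero_le s) ht.1
  have hlt : qfun tt s t < s := (Nat.findGreatest_le s).lt_of_ne fun h : qfun tt s t = s => by
    rw [h] at hspec
    exact ht.2.not_ge hspec
  exact ⟨hlt, hspec, not_le.mp (Nat.findGreatest_is_greatest (Nat.lt_succ_self _) hlt)⟩

lemma eq_exp_cumulativeExponent_mul {tt : ℕ → ℝ} {s : ℕ} (hmono : ∀ j < s, tt j < tt (j + 1))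
    {ρ : ℕ → ℝ} {w x : ℝ → ℝ} (hw : ContinuousOn w (Ico (tt 0) (tt s)))
    (hx : ContinuousOn x (Ico (tt 0) (tt s)))
    (hxd : ∀ j < s, ∀ t ∈ Ioo (tt j) (tt (j + 1)), HasDerivAt x (ρ j * w t * x t) t)
    {j : ℕ} (hj : j < s) {t : ℝ} (ht : t ∈ Icc (tt j) (tt (j + 1))) (hts : t < tt s) :
    x t = Real.exp (cumulativeExponent tt ρ w j t) * x (tt 0) := by
  have htt := strictMonoOn_Iic_of_lt_succ hmono
  have hstep : ∀ j < s, ∀ t ∈ Icc (tt j) (tt (j + 1)), t < tt s →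
      x t = Real.exp (ρ j * ∫ τ in tt j..t, w τ) * x (tt j) := fun j hj t ht hts => by
    have hsub : Icc (tt j) t ⊆ Ico (tt 0) (tt s) := fun τ hτ =>
      ⟨(htt.monotoneOn (Nat.zero_le s) hj.le (Nat.zero_le j)).trans hτ.1, hτ.2.trans_lt hts⟩
    exact linear_ode_eq_exp_integral_mul ht.1 (hx.mono hsub) (hw.mono hsub)
      fun τ hτ => hxd j hj τ ⟨hτ.1, hτ.2.trans_le ht.2⟩
  induction j generalizing t with
  | zero => rw [cumulativeExponent_zero, hstep 0 hj t ht hts]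
  | succ j ih =>
    have hknot := ih (Nat.lt_of_succ_lt hj) ⟨(hmono j (Nat.lt_of_succ_lt hj)).le, le_rfl⟩
      (htt hj.le (le_refl s) hj)
    rw [hstep _ hj t ht hts, hknot, cumulativeExponent_succ, Real.exp_add]
    ring

lemma eq_exp_cumulativeExponent_qfun_mul {tt : ℕ → ℝ} {s : ℕ}
    (hmono : ∀ j < s, tt j < tt (j + 1)) {ρ : ℕ → ℝ} {w x : ℝ → ℝ}
    (hw : ContinuousOn w (Ico (tt 0) (tt s))) (hx : ContinuousOn x (Ico (tt 0) (tt s)))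
    (hxd : ∀ j < s, ∀ t ∈ Ioo (tt j) (tt (j + 1)), HasDerivAt x (ρ j * w t * x t) t)
    {t : ℝ} (ht : t ∈ Ico (tt 0) (tt s)) :
    x t = Real.exp (cumulativeExponent tt ρ w (qfun tt s t) t) * x (tt 0) :=
  have ⟨hq, hqt, htq⟩ := qfun_spec ht
  eq_exp_cumulativeExponent_mul hmono hw hx hxd hq ⟨hqt, htq.le⟩ ht.2

lemma etaR_eq_exp_cumulativeExponent (κ : ℝ) (tt : ℕ → ℝ) (s : ℕ) (cg : ℕ → ℝ) (t : ℝ) :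
    etaR κ tt s cg t = Real.exp
      (cumulativeExponent tt (fun j => -κ * indR (cg j)) (fun _ => 1) (qfun tt s t) t) := by
  simp only [etaR, cumulativeExponent, intervalIntegral.integral_const, smul_eq_mul, mul_one,
    Finset.mul_sum, sub_eq_add_neg]
  congr 2
  · exact Finset.sum_congr rfl fun j _ => by ring
  · ring

lemma etaM_eq_exp_cumulativeExponent (κ : ℝ) (tt : ℕ → ℝ) (s : ℕ) (cg : ℕ → ℝ) (y : ℝ → ℝ)
    (t : ℝ) :
    etaM κ tt s cg y t =
      Real.exp (cumulativeExponent tt (fun j => -κ * cg j * indR (cg j)) y (qfun tt s t) t) := by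
  simp only [etaM, cumulativeExponent, Finset.mul_sum, sub_eq_add_neg]
  congr 2
  · exact Finset.sum_congr rfl fun j _ => by ring
  · ring

theorem Matrix.mulVec_injective_of_rank_eq {K m n : Type*} [Field K] [Fintype m] [Fintype n]
    {A : Matrix m n K} (hA : A.rank = Fintype.card n) : Function.Injective A.mulVec := by
  have hker : Module.finrank K (LinearMap.ker A.mulVecLin) = 0 := by
    have := LinearMap.finrank_range_add_finrank_ker A.mulVecLin
    rw [Module.finrank_fintype_fun_eq_card] at this
    rw [Matrix.rank] at hA
    omega
  exact LinearMap.ker_eq_bot.mp (Submodule.finrank_eq_zero.mp hker)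

theorem stmt_16_general (n s m : ℕ)
    (R M : Finset (Fin n)) (hpart : Disjoint R M ∧ R ∪ M = Finset.univ)
    (κ : ℝ) (tt : ℕ → ℝ) (hmono : ∀ j < s, tt j < tt (j + 1))
    (c : Fin n → ℕ → ℝ)
    (x : Fin n → ℝ → ℝ)
    (hxc : ∀ k, ContinuousOn (x k) (Set.Ico (tt 0) (tt s)))
    (hR : ∀ k ∈ R, ∀ j ∈ Finset.Icc 1 s, ∀ t ∈ Set.Ioo (tt (j - 1)) (tt j),
      HasDerivAt (x k) (-κ * indR (c k (j - 1)) * x k t) t)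
    (hM : ∀ k ∈ M, ∀ j ∈ Finset.Icc 1 s, ∀ t ∈ Set.Ioo (tt (j - 1)) (tt j),
      HasDerivAt (x k)
        (-κ * c k (j - 1) * indR (c k (j - 1)) * (1 - ∑ q, x q t) * x k t) t)
    (ttil : Fin m → ℝ) (httil : ∀ i, ttil i ∈ Set.Ico (tt 0) (tt s))
    (A : Matrix (Fin m) (Fin n) ℝ)
    (hA : ∀ i k, A i k =
      if k ∈ R then etaR κ tt s (c k) (ttil i)
      else etaM κ tt s (c k) (fun τ => 1 - ∑ q, x q τ) (ttil i)) :
    (A.mulVec (fun k => x k (tt 0)) = fun i => 1 - (1 - ∑ q, x q (ttil i)))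
    ∧ (A.rank = n → ∀ z : Fin n → ℝ,
        A.mulVec z = (fun i => 1 - (1 - ∑ q, x q (ttil i))) →
        z = fun k => x k (tt 0)) := by
  have hIcc {j : ℕ} (hj : j < s) : j + 1 ∈ Finset.Icc 1 s := Finset.mem_Icc.mpr ⟨j.succ_pos, hj⟩
  have hy : ContinuousOn (fun τ => 1 - ∑ q, x q τ) (Ico (tt 0) (tt s)) :=
    continuousOn_const.sub (continuousOn_finsetSum _ fun k _ => hxc k)
  have hsol (i : Fin m) (k : Fin n) : A i k * x k (tt 0) = x k (ttil i) := by
    rw [hA]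
    split_ifs with hk
    · rw [etaR_eq_exp_cumulativeExponent]
      refine (eq_exp_cumulativeExponent_qfun_mul hmono continuousOn_const (hxc k)
        (fun j hj t ht => ?_) (httil i)).symm
      simpa using hR k hk _ (hIcc hj) t ht
    · have hkM : k ∈ M := (Finset.mem_union.mp (hpart.2 ▸ Finset.mem_univ k)).resolve_left hk
      rw [etaM_eq_exp_cumulativeExponent]
      refine (eq_exp_cumulativeExponent_qfun_mul hmono hy (hxc k) (fun j hj t ht => ?_)
        (httil i)).symm
      simpa using hM k hkM _ (hIcc hj) t ht
  have hsys : A.mulVec (fun k => x k (tt 0)) = fun i => 1 - (1 - ∑ q, x q (ttil i)) :=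
    funext fun i => by simp only [Matrix.mulVec, dotProduct, hsol, sub_sub_cancel]
  exact ⟨hsys, fun hrank z hz =>
    Matrix.mulVec_injective_of_rank_eq (by simpa using hrank) (hz.trans hsys.symm)⟩

/-- During the vaccine-surplus period, the matrix `A` with entries `η_k(t̃_i)` satisfies
`A (x_1(t*),…,x_n(t*))ᵀ = (1 − y(t̃_1),…,1 − y(t̃_m))ᵀ`; if moreover `A` has rank `n`, then
`(x_1(t*),…,x_n(t*))` is the unique solution of this linear system, i.e. the proportions
of unvaccinated individuals in each group at the vaccine abundance time `t* = t_0` are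
globally identifiable from the output `y = 1 − Σ_q x_q`. -/
theorem stmt_16 (n s m : ℕ) (hn : 1 ≤ n) (hs : 1 ≤ s) (hm : n ≤ m)
    (R M : Finset (Fin n)) (hpart : Disjoint R M ∧ R ∪ M = Finset.univ)
    (κ : ℝ) (tt : ℕ → ℝ) (hmono : ∀ j < s, tt j < tt (j + 1))
    (c : Fin n → ℕ → ℝ)
    (x : Fin n → ℝ → ℝ)
    (hxc : ∀ k, ContinuousOn (x k) (Set.Ico (tt 0) (tt s)))
    (hR : ∀ k ∈ R, ∀ j ∈ Finset.Icc 1 s, ∀ t ∈ Set.Ioo (tt (j - 1)) (tt j),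
      HasDerivAt (x k) (-κ * indR (c k (j - 1)) * x k t) t)
    (hM : ∀ k ∈ M, ∀ j ∈ Finset.Icc 1 s, ∀ t ∈ Set.Ioo (tt (j - 1)) (tt j),
      HasDerivAt (x k)
        (-κ * c k (j - 1) * indR (c k (j - 1)) * (1 - ∑ q, x q t) * x k t) t)
    (ttil : Fin m → ℝ) (httil : ∀ i, ttil i ∈ Set.Ico (tt 0) (tt s))
    (A : Matrix (Fin m) (Fin n) ℝ)
    (hA : ∀ i k, A i k =
      if k ∈ R then etaR κ tt s (c k) (ttil i)
      else etaM κ tt s (c k) (fun τ => 1 - ∑ q, x q τ) (ttil i)) :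
    (A.mulVec (fun k => x k (tt 0)) = fun i => 1 - (1 - ∑ q, x q (ttil i)))
    ∧ (A.rank = n → ∀ z : Fin n → ℝ,
        A.mulVec z = (fun i => 1 - (1 - ∑ q, x q (ttil i))) →
        z = fun k => x k (tt 0)) :=
  stmt_16_general n s m R M hpart κ tt hmono c x hxc hR hM ttil httil A hA
end

section
/- Let m ≥ 1 be an integer, let c_1,…,c_m and c̄_1,…,c̄_m be reals, write a⁺ = a·1(a > 0) (so a⁺ = a if a > 0 and a⁺ = 0 otherwise), and let x_1,…,x_m be positive reals. Let P be the m×m real matrix with entries P_{l,i} = Σ_{j=0}^{l} (c_i⁺)^j (c̄_i⁺)^{l−j} for row indices l = 0,1,…,m−1 and column indices i = 1,…,m (so the first row is all ones). If det P ≠ 0 and Σ_{i=1}^m (c_i⁺)^k x_i = Σ_{i=1}^m (c̄_i⁺)^k x_i for every k = 1,…,m, then c_i⁺ = c̄_i⁺ for all i = 1,…,m. -/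
/-!
Put `v_i = (c_i⁺ - c̄_i⁺) x_i`. By `a^(l+1) - b^(l+1) = (a - b) Σ_{j ≤ l} a^j b^(l-j)`, the
`l`-th entry of `P v` is the difference of the power sums of order `l + 1`, which vanishes.
Since `P` is invertible, `v = 0`, and `x_i ≠ 0` gives `c_i⁺ = c̄_i⁺`.
-/

noncomputable def posP (a : ℝ) : ℝ := if 0 < a then a else 0

open Finset

section GeomSumMatrix

variable {R : Type*} {ι : Type*} {m : ℕ}

def geomSumMatrix [CommRing R] (a b : ι → R) : Matrix (Fin m) ι R :=
  Matrix.of fun l i => ∑ j ∈ range ((l : ℕ) + 1), a i ^ j * b i ^ ((l : ℕ) - j)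

theorem geomSumMatrix_mulVec [CommRing R] [Fintype ι] (a b x : ι → R) :
    (geomSumMatrix (m := m) a b).mulVec (fun i => (a i - b i) * x i) =
      fun l : Fin m => ∑ i, a i ^ ((l : ℕ) + 1) * x i - ∑ i, b i ^ ((l : ℕ) + 1) * x i := by
  funext l
  simp only [Matrix.mulVec, dotProduct, geomSumMatrix, Matrix.of_apply, ← sum_sub_distrib]
  refine sum_congr rfl fun i _ => ?_
  have hgeom := geom_sum₂_mul (a i) (b i) ((l : ℕ) + 1)
  simp only [add_tsub_cancel_right] at hgeom
  rw [← mul_assoc, hgeom, sub_mul]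

theorem eq_of_geomSumMatrix_det_ne_zero [Field R] (a b x : Fin m → R)
    (hdet : (geomSumMatrix (m := m) a b).det ≠ 0) (hx : ∀ i, x i ≠ 0)
    (hsum : ∀ l : Fin m, ∑ i, a i ^ ((l : ℕ) + 1) * x i = ∑ i, b i ^ ((l : ℕ) + 1) * x i) :
    a = b := by
  have hv : (fun i => (a i - b i) * x i) = 0 := by
    refine Matrix.eq_zero_of_mulVec_eq_zero hdet ?_
    rw [geomSumMatrix_mulVec]
    funext l
    simp [hsum l]
  funext i
  have hi := congrFun hv i
  simpa [sub_eq_zero, hx i] using hi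

end GeomSumMatrix

theorem stmt_18_general (m : ℕ) (c cb : Fin m → ℝ)
    (x : Fin m → ℝ) (hx : ∀ i, 0 < x i)
    (P : Matrix (Fin m) (Fin m) ℝ)
    (hP : ∀ (l i : Fin m), P l i =
      ∑ j ∈ Finset.range ((l : ℕ) + 1), (posP (c i)) ^ j * (posP (cb i)) ^ ((l : ℕ) - j))
    (hdet : P.det ≠ 0)
    (hsum : ∀ k ∈ Finset.Icc 1 m,
      ∑ i, (posP (c i)) ^ k * x i = ∑ i, (posP (cb i)) ^ k * x i) :
    ∀ i, posP (c i) = posP (cb i) := by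
  have hPeq : P = geomSumMatrix (fun i => posP (c i)) (fun i => posP (cb i)) := Matrix.ext hP
  subst hPeq
  have hpos := eq_of_geomSumMatrix_det_ne_zero _ _ x hdet (fun i => (hx i).ne')
    fun l => hsum _ (mem_Icc.mpr ⟨l.val.succ_pos, l.isLt⟩)
  exact congrFun hpos

/-- If the matrix `P` with entries `P_{l,i} = Σ_{j=0}^l (c_i⁺)^j (c̄_i⁺)^{l−j}` has nonzero
determinant, the `x_i` are positive, and the positive-part power sums agree,
`Σ_i (c_i⁺)^k x_i = Σ_i (c̄_i⁺)^k x_i` for `k = 1,…,m`, then `c_i⁺ = c̄_i⁺` for all `i`. -/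
theorem stmt_18 (m : ℕ) (hm : 1 ≤ m) (c cb : Fin m → ℝ)
    (x : Fin m → ℝ) (hx : ∀ i, 0 < x i)
    (P : Matrix (Fin m) (Fin m) ℝ)
    (hP : ∀ (l i : Fin m), P l i =
      ∑ j ∈ Finset.range ((l : ℕ) + 1), (posP (c i)) ^ j * (posP (cb i)) ^ ((l : ℕ) - j))
    (hdet : P.det ≠ 0)
    (hsum : ∀ k ∈ Finset.Icc 1 m,
      ∑ i, (posP (c i)) ^ k * x i = ∑ i, (posP (cb i)) ^ k * x i) :
    ∀ i, posP (c i) = posP (cb i) :=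
  stmt_18_general m c cb x hx P hP hdet hsum
end
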